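/- arXiv:2504.01782 — 5 statements merged into one kernel-verified Lean document; each statement's English description precedes it below -/
import Mathlib

section
/- Let π and ρ be pair partitions of a finite set of size 2p, viewed as fixed-point-free involutions. Then every orbit (block) of the join partition π ∨ ρ is the union of exactly two distinct cycles of the permutation πρ, and these two cycles have equal length. In particular, 2·#(π ∨ ρ) = #(πρ), where #(π ∨ ρ) is the number of blocks of the join of the two partitions and #(πρ) is the number of cycles of the product permutation. -/
open MulAction

/-- Every block of the join `π ∨ ρ` of two pairings (fixed-point-free involutions) of a set of
size `2p` is the union of exactly two distinct cycles of the product permutation `πρ`, these two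
cycles having equal length; in particular `2 · #(π ∨ ρ) = #(πρ)`.  Blocks of `π ∨ ρ` are the
orbits of the subgroup generated by `π` and `ρ`, and cycles of `πρ` are the orbits of the cyclic
subgroup generated by `πρ`. -/
theorem pairing_join_two_cycles {α : Type*} [Fintype α] [DecidableEq α] {p : ℕ}
    (hcard : Fintype.card α = 2 * p)
    (π ρ : Equiv.Perm α)
    (hπinv : π * π = 1) (hπ : ∀ x, π x ≠ x)
    (hρinv : ρ * ρ = 1) (hρ : ∀ x, ρ x ≠ x) :
    (∀ x : α, ∃ a b : α,
      MulAction.orbit (Subgroup.closure {π, ρ} : Subgroup (Equiv.Perm α)) x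
        = MulAction.orbit (Subgroup.zpowers (π * ρ)) a ∪
          MulAction.orbit (Subgroup.zpowers (π * ρ)) b ∧
      MulAction.orbit (Subgroup.zpowers (π * ρ)) a ≠
        MulAction.orbit (Subgroup.zpowers (π * ρ)) b ∧
      Nat.card (MulAction.orbit (Subgroup.zpowers (π * ρ)) a) =
        Nat.card (MulAction.orbit (Subgroup.zpowers (π * ρ)) b)) ∧
    2 * Nat.card (MulAction.orbitRel.Quotient
          (Subgroup.closure {π, ρ} : Subgroup (Equiv.Perm α)) α)
      = Nat.card (MulAction.orbitRel.Quotient (Subgroup.zpowers (π * ρ)) α) := by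
  classical
  set σ : Equiv.Perm α := π * ρ with hσ
  set G : Subgroup (Equiv.Perm α) := Subgroup.closure {π, ρ} with hG
  set H : Subgroup (Equiv.Perm α) := Subgroup.zpowers σ with hH
  have hπ1 : π⁻¹ = π := inv_eq_of_mul_eq_one_right hπinv
  have hρ1 : ρ⁻¹ = ρ := inv_eq_of_mul_eq_one_right hρinv
  -- conjugation relations
  have hconjπ : ∀ k : ℤ, π * σ ^ k = σ ^ (-k) * π := by
    intro k
    have h : π * σ * π⁻¹ = σ⁻¹ := by
      rw [hσ, hπ1, mul_inv_rev, hπ1, hρ1, ← mul_assoc, hπinv, one_mul]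
    calc π * σ ^ k = (π * σ * π⁻¹) ^ k * π := by rw [conj_zpow]; group
      _ = σ ^ (-k) * π := by rw [h, inv_zpow, zpow_neg]
  have hconjρ : ∀ k : ℤ, ρ * σ ^ k = σ ^ (-k) * ρ := by
    intro k
    have h : ρ * σ * ρ⁻¹ = σ⁻¹ := by
      rw [hσ, hρ1, mul_inv_rev, hπ1, hρ1, mul_assoc, mul_assoc, hρinv, mul_one]
    calc ρ * σ ^ k = (ρ * σ * ρ⁻¹) ^ k * ρ := by rw [conj_zpow]; group
      _ = σ ^ (-k) * ρ := by rw [h, inv_zpow, zpow_neg]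
  -- pointwise versions
  have appconjπ : ∀ (k : ℤ) (y : α), π ((σ ^ k) y) = (σ ^ (-k)) (π y) := by
    intro k y
    have := DFunLike.congr_fun (hconjπ k) y
    simpa [Equiv.Perm.mul_apply] using this
  have appconjρ : ∀ (k : ℤ) (y : α), ρ ((σ ^ k) y) = (σ ^ (-k)) (ρ y) := by
    intro k y
    have := DFunLike.congr_fun (hconjρ k) y
    simpa [Equiv.Perm.mul_apply] using this
  have happ2π : ∀ y : α, π (π y) = y := by
    intro y
    have := DFunLike.congr_fun hπinv y
    simpa [Equiv.Perm.mul_apply] using this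
  have happρ : ∀ y : α, ρ y = (σ ^ (-1 : ℤ)) (π y) := by
    intro y
    have h : σ ^ (-1 : ℤ) * π = ρ := by
      rw [zpow_neg_one, hσ, mul_inv_rev, hπ1, hρ1, mul_assoc, hπinv, mul_one]
    have := DFunLike.congr_fun h y
    simpa [Equiv.Perm.mul_apply] using this.symm
  -- orbit membership for zpowers
  have hmemz : ∀ y z : α, z ∈ orbit H y ↔ ∃ k : ℤ, (σ ^ k) y = z := by
    intro y z
    constructor
    · rintro ⟨⟨g, hg⟩, rfl⟩
      obtain ⟨k, rfl⟩ := Subgroup.mem_zpowers_iff.mp hg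
      exact ⟨k, rfl⟩
    · rintro ⟨k, rfl⟩
      exact ⟨⟨σ ^ k, Subgroup.mem_zpowers_iff.mpr ⟨k, rfl⟩⟩, rfl⟩
  have hπG : π ∈ G := Subgroup.subset_closure (by simp)
  have hρG : ρ ∈ G := Subgroup.subset_closure (by simp)
  have hσG : σ ∈ G := mul_mem hπG hρG
  have hle : H ≤ G := Subgroup.zpowers_le.mpr hσG
  -- step lemmas
  have stepπ : ∀ x y : α, y ∈ orbit H x ∪ orbit H (π x) →
      π y ∈ orbit H x ∪ orbit H (π x) := by
    rintro x y (h | h)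
    · obtain ⟨k, rfl⟩ := (hmemz x y).mp h
      exact Or.inr ((hmemz (π x) _).mpr ⟨-k, (appconjπ k x).symm⟩)
    · obtain ⟨k, rfl⟩ := (hmemz (π x) y).mp h
      refine Or.inl ((hmemz x _).mpr ⟨-k, ?_⟩)
      rw [appconjπ k (π x), happ2π]
  have stepρ : ∀ x y : α, y ∈ orbit H x ∪ orbit H (π x) →
      ρ y ∈ orbit H x ∪ orbit H (π x) := by
    rintro x y (h | h)
    · obtain ⟨k, rfl⟩ := (hmemz x y).mp h
      refine Or.inr ((hmemz (π x) _).mpr ⟨-k + -1, ?_⟩)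
      rw [appconjρ k x, happρ x, zpow_add]
      rfl
    · obtain ⟨k, rfl⟩ := (hmemz (π x) y).mp h
      refine Or.inl ((hmemz x _).mpr ⟨-k + -1, ?_⟩)
      rw [appconjρ k (π x), happρ (π x), happ2π, zpow_add]
      rfl
  -- Claim A : orbit decomposition
  have horbitU : ∀ x : α, orbit G x = orbit H x ∪ orbit H (π x) := by
    intro x
    apply Set.eq_of_subset_of_subset
    · rintro z ⟨⟨g, hg⟩, rfl⟩
      have main : ∀ g ∈ G, ∀ y : α,
          y ∈ orbit H x ∪ orbit H (π x) → g y ∈ orbit H x ∪ orbit H (π x) := by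
        intro g hg
        rw [hG] at hg
        induction hg using Subgroup.closure_induction with
        | mem w hw =>
          rcases hw with hw | hw
          · subst hw; exact stepπ x
          · rw [Set.mem_singleton_iff] at hw; subst hw; exact stepρ x
        | one => intro y hy; simpa using hy
        | mul a b ha hb iha ihb =>
          intro y hy
          have := iha _ (ihb y hy)
          simpa [Equiv.Perm.mul_apply] using this
        | inv a ha iha =>
          intro y hy
          -- a is a word in involutions; use that `iha` composed with bijectivity
          have hsurj : ∀ z ∈ orbit H x ∪ orbit H (π x),
              a z ∈ orbit H x ∪ orbit H (π x) := iha
          -- a⁻¹ y : show membership. Since a maps the finite set into itself injectively,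
          -- it maps onto it.
          have hmapsto : Set.MapsTo a (orbit H x ∪ orbit H (π x))
              (orbit H x ∪ orbit H (π x)) := hsurj
          have hfin : (orbit H x ∪ orbit H (π x)).Finite := Set.toFinite _
          have hsurjon := Set.Finite.surjOn_iff_bijOn_of_mapsTo hfin hmapsto
          have hinj : Set.InjOn a (orbit H x ∪ orbit H (π x)) :=
            fun u _ v _ h => a.injective h
          have hbij : Set.BijOn a (orbit H x ∪ orbit H (π x))
              (orbit H x ∪ orbit H (π x)) :=
            (Set.Finite.injOn_iff_bijOn_of_mapsTo hfin hmapsto).mp hinj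
          obtain ⟨w, hw, hwy⟩ := hbij.surjOn hy
          have : a⁻¹ y = w := by
            rw [← hwy]; exact a.symm_apply_apply w
          rw [show (a⁻¹ : Equiv.Perm α) y = w from this]
          exact hw
      exact main g hg x (Or.inl (mem_orbit_self x))
    · rintro z (h | h)
      · obtain ⟨k, rfl⟩ := (hmemz x z).mp h
        exact ⟨⟨σ ^ k, Subgroup.zpow_mem _ hσG k⟩, rfl⟩
      · obtain ⟨k, rfl⟩ := (hmemz (π x) z).mp h
        exact ⟨⟨σ ^ k * π, mul_mem (Subgroup.zpow_mem _ hσG k) hπG⟩, rfl⟩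
  -- Claim B : distinctness
  have hdist : ∀ x : α, orbit H x ≠ orbit H (π x) := by
    intro x h
    have hmem : π x ∈ orbit H x := by rw [h]; exact mem_orbit_self (π x)
    obtain ⟨k, hk⟩ := (hmemz x (π x)).mp hmem
    rcases Int.even_or_odd k with ⟨m, hm⟩ | ⟨m, hm⟩
    · apply hπ ((σ ^ m) x)
      calc π ((σ ^ m) x) = (σ ^ (-m)) (π x) := appconjπ m x
        _ = (σ ^ (-m)) ((σ ^ k) x) := by rw [hk]
        _ = (σ ^ (-m + k)) x := by rw [zpow_add]; rfl
        _ = (σ ^ m) x := by rw [show -m + k = m by omega]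
    · apply hρ ((σ ^ m) x)
      calc ρ ((σ ^ m) x) = (σ ^ (-m)) (ρ x) := appconjρ m x
        _ = (σ ^ (-m)) ((σ ^ (-1 : ℤ)) (π x)) := by rw [happρ x]
        _ = (σ ^ (-m)) ((σ ^ (-1 : ℤ)) ((σ ^ k) x)) := by rw [hk]
        _ = (σ ^ (-m + (-1 + k))) x := by
            rw [zpow_add, zpow_add]; rfl
        _ = (σ ^ m) x := by rw [show -m + (-1 + k) = m by omega]
  -- Claim C : equal cardinalities
  have himg : ∀ x : α, π '' (orbit H x) = orbit H (π x) := by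
    intro x
    ext z
    simp only [Set.mem_image]
    constructor
    · rintro ⟨w, hw, rfl⟩
      obtain ⟨k, rfl⟩ := (hmemz x w).mp hw
      exact (hmemz _ _).mpr ⟨-k, (appconjπ k x).symm⟩
    · intro h
      obtain ⟨k, rfl⟩ := (hmemz (π x) z).mp h
      refine ⟨(σ ^ (-k)) x, (hmemz _ _).mpr ⟨-k, rfl⟩, ?_⟩
      rw [appconjπ (-k) x, neg_neg]
  have hcardeq : ∀ x : α, Nat.card (orbit H x) = Nat.card (orbit H (π x)) := by
    intro x
    rw [← himg x, Nat.card_image_of_injective π.injective]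
  refine ⟨fun x => ⟨x, π x, horbitU x, ?_, hcardeq x⟩, ?_⟩
  · exact hdist x
  -- counting part
  · set f : (orbitRel.Quotient G α) × Bool → orbitRel.Quotient H α :=
      fun q => Quotient.mk'' (cond q.2 (π (Quotient.out q.1)) (Quotient.out q.1)) with hf
    set φ : orbitRel.Quotient H α → orbitRel.Quotient G α :=
      Quotient.map' id (fun a b h => by
        rw [MulAction.orbitRel_apply] at h ⊢
        obtain ⟨⟨g, hg⟩, rfl⟩ := h
        exact ⟨⟨g, hle hg⟩, rfl⟩) with hφ
    have hmkG : ∀ x : α, (Quotient.mk'' (π x) : orbitRel.Quotient G α) = Quotient.mk'' x := by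
      intro x
      exact Quotient.sound' (by rw [MulAction.orbitRel_apply]; exact ⟨⟨π, hπG⟩, rfl⟩)
    have hφf : ∀ q b, φ (f (q, b)) = q := by
      intro q b
      have : φ (f (q, b)) = Quotient.mk'' (cond b (π (Quotient.out q)) (Quotient.out q)) := rfl
      rw [this]
      cases b
      · simpa using Quotient.out_eq' q
      · simp only [cond_true]
        rw [hmkG]
        exact Quotient.out_eq' q
    have hbij : Function.Bijective f := by
      constructor
      · rintro ⟨q, b⟩ ⟨q', b'⟩ hfe
        have hq : q = q' := by
          have := congrArg φ hfe
          rwa [hφf, hφf] at this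
        subst hq
        suffices hb : b = b' by rw [hb]
        by_contra hbb
        have hne : orbit H (Quotient.out q) ≠ orbit H (π (Quotient.out q)) :=
          hdist (Quotient.out q)
        have hfe' : (Quotient.mk'' (cond b (π (Quotient.out q)) (Quotient.out q)) :
            orbitRel.Quotient H α)
            = Quotient.mk'' (cond b' (π (Quotient.out q)) (Quotient.out q)) := hfe
        have key : (Quotient.mk'' (Quotient.out q) : orbitRel.Quotient H α)
            = Quotient.mk'' (π (Quotient.out q)) := by
          cases b <;> cases b'
          · exact absurd rfl hbb
          · exact hfe'
          · exact hfe'.symm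
          · exact absurd rfl hbb
        have hrel : Quotient.out q ∈ orbit (↥H) (π (Quotient.out q)) :=
          MulAction.orbitRel_apply.mp (Quotient.eq''.mp key)
        exact hne (MulAction.orbit_eq_iff.mpr hrel)
      · intro q1
        set z : α := Quotient.out q1 with hz
        set q : orbitRel.Quotient G α := Quotient.mk'' z with hq
        have houtrel : Quotient.out q ∈ orbit (↥G) z := by
          have h1 : (Quotient.mk'' (Quotient.out q) : orbitRel.Quotient G α)
              = Quotient.mk'' z := by rw [Quotient.out_eq']
          exact MulAction.orbitRel_apply.mp (Quotient.eq''.mp h1)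
        have hzrel : z ∈ orbit G (Quotient.out q) := by
          rw [MulAction.orbit_eq_iff.mpr houtrel]
          exact mem_orbit_self z
        rw [horbitU (Quotient.out q)] at hzrel
        rcases hzrel with hzl | hzr
        · refine ⟨(q, false), ?_⟩
          have : f (q, false) = Quotient.mk'' (Quotient.out q) := rfl
          rw [this, ← Quotient.out_eq' q1, ← hz]
          exact Quotient.sound' (Setoid.symm' _ (MulAction.orbitRel_apply.mpr hzl))
        · refine ⟨(q, true), ?_⟩
          have : f (q, true) = Quotient.mk'' (π (Quotient.out q)) := rfl
          rw [this, ← Quotient.out_eq' q1, ← hz]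
          exact Quotient.sound' (Setoid.symm' _ (MulAction.orbitRel_apply.mpr hzr))
    have hcards := Nat.card_eq_of_bijective f hbij
    calc 2 * Nat.card (orbitRel.Quotient (↥G) α)
        = Nat.card (orbitRel.Quotient (↥G) α) * Nat.card Bool := by
          rw [Nat.card_eq_fintype_card (α := Bool), Fintype.card_bool, mul_comm]
      _ = Nat.card ((orbitRel.Quotient (↥G) α) × Bool) := (Nat.card_prod _ _).symm
      _ = Nat.card (orbitRel.Quotient (↥H) α) := hcards
end

section
/- Every pairing π of [±p] can be written as π = ε σ δ σ⁻¹ ε for some permutation σ ∈ S_p and some involution ε lying in the subgroup ∏_{k=1}^p S({k,−k}) (i.e., ε(k) ∈ {k, −k} for each k). Moreover, for any such decomposition, |πδ| = 2|σ|, where |·| denotes the transposition length in S(±p) and S_p respectively. -/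
/-- The model of `[±p]`: positive elements are `Sum.inl k`, negative elements are `Sum.inr k`. -/
abbrev PMSet (p : ℕ) := Fin p ⊕ Fin p

/-- The pairing `δ = (1,−1)(2,−2)⋯(p,−p)`. -/
def deltaPerm (p : ℕ) : Equiv.Perm (PMSet p) := Equiv.sumComm (Fin p) (Fin p)

/-- The embedding of `S_p` into `S(±p)`, acting as the identity on negative elements. -/
def embPos {p : ℕ} (σ : Equiv.Perm (Fin p)) : Equiv.Perm (PMSet p) :=
  Equiv.sumCongr σ (Equiv.refl (Fin p))

/-- Membership in the subgroup `∏_{k=1}^p S({k,−k})`: `ε(k) ∈ {k, −k}` for every `k`. -/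
def IsEps {p : ℕ} (ε : Equiv.Perm (PMSet p)) : Prop :=
  ∀ k : Fin p,
    (ε (Sum.inl k) = Sum.inl k ∧ ε (Sum.inr k) = Sum.inr k) ∨
    (ε (Sum.inl k) = Sum.inr k ∧ ε (Sum.inr k) = Sum.inl k)

/-- The length `|σ|` of a permutation: the minimal number of transpositions whose
product equals `σ`. -/
noncomputable def permLength {α : Type*} [DecidableEq α] [Fintype α] (σ : Equiv.Perm α) : ℕ :=
  sInf {n | ∃ l : List (Equiv.Perm α), l.length = n ∧ (∀ τ ∈ l, τ.IsSwap) ∧ l.prod = σ}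

open Equiv Equiv.Perm Function

set_option linter.unusedSectionVars false
set_option linter.unusedVariables false


-- counting helpers
theorem card_compl_single {α : Type*} [Finite α] (b : α) :
    Nat.card {x : α // x ≠ b} + 1 = Nat.card α := by
  classical
  cases nonempty_fintype α
  simp only [Nat.card_eq_fintype_card]
  rw [Fintype.card_subtype]
  rw [show (Finset.univ.filter (· ≠ b)) = Finset.univ.erase b by ext; simp [Finset.mem_erase, and_comm]]
  rw [Finset.card_erase_of_mem (Finset.mem_univ b), Finset.card_univ]
  have : 0 < Fintype.card α := Fintype.card_pos_iff.mpr ⟨b⟩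
  omega

theorem card_add_one_le_of_surj {α β : Type*} [Finite α] (f : α → β) (hf : Function.Surjective f)
    {a b : α} (hab : a ≠ b) (hfab : f a = f b) : Nat.card β + 1 ≤ Nat.card α := by
  have hsurj : Function.Surjective (fun x : {x : α // x ≠ b} => f x.1) := by
    intro y
    obtain ⟨x, rfl⟩ := hf y
    by_cases hx : x = b
    · subst hx; exact ⟨⟨a, hab⟩, hfab⟩
    · exact ⟨⟨x, hx⟩, rfl⟩
  have := Nat.card_le_card_of_surjective _ hsurj
  have h2 := card_compl_single b
  omega

theorem card_le_card_add_one_of_inj {α β : Type*} [Finite α] [Finite β] (f : α → β) (b : α)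
    (hf : ∀ x y, x ≠ b → y ≠ b → f x = f y → x = y) : Nat.card α ≤ Nat.card β + 1 := by
  have hinj : Function.Injective (fun x : {x : α // x ≠ b} => f x.1) := by
    rintro ⟨x, hx⟩ ⟨y, hy⟩ h
    exact Subtype.ext (hf x y hx hy h)
  have := Nat.card_le_card_of_injective _ hinj
  have h2 := card_compl_single b
  omega

set_option linter.unusedSectionVars false

noncomputable def ncyc {α : Type*} (f : Perm α) : ℕ :=
  Nat.card (Quotient (SameCycle.setoid f))

section NC
variable {α : Type*} [DecidableEq α] [Fintype α]

theorem sameCycle_subset {σ : Perm α} {R : α → α → Prop} (hR : Equivalence R)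
    (hstep : ∀ y, R (σ y) y) : ∀ x y, σ.SameCycle x y → R x y := by
  have key : ∀ (i : ℕ) (x : α), R ((σ ^ i) x) x := by
    intro i
    induction i with
    | zero => intro x; exact hR.refl x
    | succ n ih =>
      intro x
      rw [pow_succ, Equiv.Perm.mul_apply]
      exact hR.trans (ih (σ x)) (hstep x)
  intro x y hxy
  obtain ⟨i, _, rfl⟩ := hxy.exists_pow_eq'
  exact hR.symm (key i x)

theorem ncyc_le_surj {σ τ : Perm α} (h : ∀ x y, σ.SameCycle x y → τ.SameCycle x y) :
    ncyc τ ≤ ncyc σ := by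
  refine Nat.card_le_card_of_surjective
    (@Quotient.map _ _ (SameCycle.setoid σ) (SameCycle.setoid τ) id h) ?_
  intro z
  induction z using Quotient.ind
  exact ⟨⟦_⟧, rfl⟩

/-- L1: multiplying by a transposition decreases the number of cycles by at most one. -/
theorem ncyc_le_swap_mul_add_one {a b : α} (hab : a ≠ b) (σ : Perm α) :
    ncyc (Equiv.swap a b * σ) ≤ ncyc σ + 1 := by
  set τ := Equiv.swap a b * σ with hτ
  set R : α → α → Prop := fun x y => τ.SameCycle x y ∨ (τ.SameCycle x a ∧ τ.SameCycle b y) ∨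
    (τ.SameCycle x b ∧ τ.SameCycle a y) with hR
  have hequiv : Equivalence R := by
    constructor
    · intro x; exact Or.inl (SameCycle.refl _ _)
    · rintro x y (h | ⟨h1, h2⟩ | ⟨h1, h2⟩)
      · exact Or.inl h.symm
      · exact Or.inr (Or.inr ⟨h2.symm, h1.symm⟩)
      · exact Or.inr (Or.inl ⟨h2.symm, h1.symm⟩)
    · rintro x y z (h | ⟨h1, h2⟩ | ⟨h1, h2⟩) (g | ⟨g1, g2⟩ | ⟨g1, g2⟩)
      · exact Or.inl (h.trans g)
      · exact Or.inr (Or.inl ⟨h.trans g1, g2⟩)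
      · exact Or.inr (Or.inr ⟨h.trans g1, g2⟩)
      · exact Or.inr (Or.inl ⟨h1, h2.trans g⟩)
      · exact Or.inl ((h1.trans (h2.trans g1).symm).trans g2)
      · exact Or.inl (h1.trans g2)
      · exact Or.inr (Or.inr ⟨h1, h2.trans g⟩)
      · exact Or.inl (h1.trans g2)
      · exact Or.inl ((h1.trans (h2.trans g1).symm).trans g2)
  have hσapp : ∀ y, σ y = Equiv.swap a b (τ y) := by
    intro y
    rw [hτ, Equiv.Perm.mul_apply, Equiv.swap_apply_self]
  have hstep : ∀ y, R (σ y) y := by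
    intro y
    by_cases h1 : τ y = a
    · have : σ y = b := by rw [hσapp, h1, Equiv.swap_apply_left]
      rw [this]
      refine Or.inr (Or.inr ⟨SameCycle.refl _ _, ?_⟩)
      rw [← h1]
      exact sameCycle_apply_left.mpr (SameCycle.refl _ _)
    · by_cases h2 : τ y = b
      · have : σ y = a := by rw [hσapp, h2, Equiv.swap_apply_right]
        rw [this]
        refine Or.inr (Or.inl ⟨SameCycle.refl _ _, ?_⟩)
        rw [← h2]
        exact sameCycle_apply_left.mpr (SameCycle.refl _ _)
      · have : σ y = τ y := by rw [hσapp, Equiv.swap_apply_of_ne_of_ne h1 h2]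
        rw [this]
        exact Or.inl (sameCycle_apply_left.mpr (SameCycle.refl _ _))
  have hsub := sameCycle_subset hequiv hstep
  set s' : Setoid α := ⟨R, hequiv⟩ with hs'
  have hq2 : Function.Surjective (@Quotient.map _ _ (SameCycle.setoid σ) s' id hsub) := by
    intro z; induction z using Quotient.ind; exact ⟨⟦_⟧, rfl⟩
  have hcard2 : Nat.card (Quotient s') ≤ ncyc σ :=
    Nat.card_le_card_of_surjective _ hq2
  have hcard1 : ncyc τ ≤ Nat.card (Quotient s') + 1 := by
    refine card_le_card_add_one_of_inj
      (@Quotient.map _ _ (SameCycle.setoid τ) s' id (fun x y h => Or.inl h))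
      (@Quotient.mk _ (SameCycle.setoid τ) b) ?_
    intro u v
    induction u using Quotient.ind with | _ x =>
    induction v using Quotient.ind with | _ y =>
    intro hu hv huv
    have hxy : R x y := Quotient.exact huv
    rcases hxy with h | ⟨h1, h2⟩ | ⟨h1, h2⟩
    · exact Quotient.sound h
    · exact absurd (Quotient.sound h2.symm : _ = _) hv
    · exact absurd (Quotient.sound h1 : _ = _) hu
  exact hcard1.trans (by omega)

/-- L2: splitting a cycle strictly increases the cycle count. -/
theorem ncyc_add_one_le_swap_mul {x : α} {σ : Perm α} (hx : σ x ≠ x) :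
    ncyc σ + 1 ≤ ncyc (Equiv.swap x (σ x) * σ) := by
  set τ := Equiv.swap x (σ x) * σ with hτ
  have hτx : τ x = x := by rw [hτ, Equiv.Perm.mul_apply, Equiv.swap_apply_right]
  have hstep : ∀ y, σ.SameCycle (τ y) y := by
    intro y
    by_cases h1 : σ y = x
    · have : τ y = σ x := by rw [hτ, Equiv.Perm.mul_apply, h1, Equiv.swap_apply_left]
      rw [this]
      have e1 : σ.SameCycle (σ x) x := sameCycle_apply_left.mpr (SameCycle.refl _ _)
      have e2 : σ.SameCycle (σ y) y := sameCycle_apply_left.mpr (SameCycle.refl _ _)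
      rw [h1] at e2
      exact e1.trans e2
    · by_cases h2 : σ y = σ x
      · have hyx : y = x := σ.injective h2
        rw [hyx, hτx]
      · have : τ y = σ y := by rw [hτ, Equiv.Perm.mul_apply, Equiv.swap_apply_of_ne_of_ne h1 h2]
        rw [this]
        exact sameCycle_apply_left.mpr (SameCycle.refl _ _)
  have hsub := sameCycle_subset (SameCycle.equivalence σ) hstep
  have hq : Function.Surjective (@Quotient.map _ _ (SameCycle.setoid τ) (SameCycle.setoid σ) id hsub) := by
    intro z; induction z using Quotient.ind; exact ⟨⟦_⟧, rfl⟩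
  refine card_add_one_le_of_surj _ hq
    (a := @Quotient.mk _ (SameCycle.setoid τ) x)
    (b := @Quotient.mk _ (SameCycle.setoid τ) (σ x)) ?_ ?_
  · intro h
    have h2 : τ.SameCycle x (σ x) := Quotient.exact h
    obtain ⟨n, hn⟩ := h2
    rw [zpow_apply_eq_self_of_apply_eq_self hτx] at hn
    exact hx hn.symm
  · exact Quotient.sound (sameCycle_apply_right.mpr (SameCycle.refl _ _))
end NC


noncomputable section AuxLength

variable {α : Type*} [DecidableEq α] [Fintype α]


theorem length_set_nonempty (σ : Perm α) :
    {n | ∃ l : List (Perm α), l.length = n ∧ (∀ τ ∈ l, τ.IsSwap) ∧ l.prod = σ}.Nonempty := by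
  obtain ⟨l, hp, hs⟩ := (truncSwapFactors σ).out
  exact ⟨l.length, l, rfl, hs, hp⟩

theorem permLength_le {σ : Perm α} {l : List (Perm α)} (hs : ∀ τ ∈ l, τ.IsSwap)
    (hp : l.prod = σ) : permLength σ ≤ l.length :=
  Nat.sInf_le ⟨l, rfl, hs, hp⟩

theorem exists_list_permLength (σ : Perm α) :
    ∃ l : List (Perm α), l.length = permLength σ ∧ (∀ τ ∈ l, τ.IsSwap) ∧ l.prod = σ :=
  Nat.sInf_mem (length_set_nonempty σ)

theorem permLength_inv_le (σ : Perm α) : permLength σ⁻¹ ≤ permLength σ := by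
  obtain ⟨l, hl, hs, hp⟩ := exists_list_permLength σ
  have hrev : ((l.map (·⁻¹)).reverse).prod = σ⁻¹ := by
    rw [← List.prod_inv_reverse, hp]
  have : permLength σ⁻¹ ≤ ((l.map (·⁻¹)).reverse).length := by
    refine permLength_le ?_ hrev
    intro τ hτ
    simp only [List.mem_reverse, List.mem_map] at hτ
    obtain ⟨t, ht, rfl⟩ := hτ
    obtain ⟨a, b, hab, rfl⟩ := hs t ht
    exact ⟨a, b, hab, by rw [swap_inv]⟩
  simpa [hl] using this

theorem permLength_inv (σ : Perm α) : permLength σ⁻¹ = permLength σ :=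
  le_antisymm (permLength_inv_le σ) (by simpa using permLength_inv_le σ⁻¹)

theorem permLength_conj (c σ : Perm α) : permLength (c * σ * c⁻¹) = permLength σ := by
  have key : ∀ c σ : Perm α, permLength (c * σ * c⁻¹) ≤ permLength σ := by
    intro c σ
    obtain ⟨l, hl, hs, hp⟩ := exists_list_permLength σ
    have hprod : (l.map (fun t => c * t * c⁻¹)).prod = c * σ * c⁻¹ := by
      have := List.prod_hom l (MulAut.conj c).toMonoidHom
      have hfun : ⇑(MulAut.conj c).toMonoidHom = fun t : Perm α => c * t * c⁻¹ := by
        funext t; rfl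
      rw [hfun, hp] at this
      exact this
    have := permLength_le (σ := c * σ * c⁻¹) (l := l.map (fun t => c * t * c⁻¹)) ?_ hprod
    · simpa [hl] using this
    · intro τ hτ
      simp only [List.mem_map] at hτ
      obtain ⟨t, ht, rfl⟩ := hτ
      obtain ⟨a, b, hab, rfl⟩ := hs t ht
      exact ⟨c a, c b, by simp [hab], (swap_apply_apply c a b).symm⟩
  refine le_antisymm (key c σ) ?_
  have := key c⁻¹ (c * σ * c⁻¹)
  simpa [mul_assoc] using this

end AuxLength


section Formula
variable {α : Type*} [DecidableEq α] [Fintype α]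

theorem ncyc_one : ncyc (1 : Perm α) = Nat.card α := by
  have hbij : Function.Bijective (@Quotient.mk _ (SameCycle.setoid (1 : Perm α))) := by
    constructor
    · intro u v huv
      have h : (1 : Perm α).SameCycle u v := Quotient.exact huv
      obtain ⟨n, hn⟩ := h
      simpa using hn
    · intro z; induction z using Quotient.ind; exact ⟨_, rfl⟩
  rw [ncyc, ← Nat.card_eq_of_bijective _ hbij]

theorem ncyc_le_card (σ : Perm α) : ncyc σ ≤ Nat.card α :=
  Nat.card_le_card_of_surjective (@Quotient.mk _ (SameCycle.setoid σ))
    (fun z => by induction z using Quotient.ind; exact ⟨_, rfl⟩)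

theorem card_le_length_add_ncyc (l : List (Perm α)) (hs : ∀ τ ∈ l, τ.IsSwap) :
    Fintype.card α ≤ l.length + ncyc l.prod := by
  induction l with
  | nil =>
    simp only [List.prod_nil, List.length_nil, zero_add]
    rw [ncyc_one, Nat.card_eq_fintype_card]
  | cons t l ih =>
    have ht : t.IsSwap := hs t List.mem_cons_self
    obtain ⟨a, b, hab, rfl⟩ := ht
    have hrec := ih (fun τ hτ => hs τ (List.mem_cons_of_mem _ hτ))
    have hkey : ncyc l.prod ≤ ncyc ((Equiv.swap a b :: l).prod) + 1 := by
      have : l.prod = Equiv.swap a b * (Equiv.swap a b :: l).prod := by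
        rw [List.prod_cons, ← mul_assoc, Equiv.swap_mul_self, one_mul]
      rw [this]
      exact ncyc_le_swap_mul_add_one hab _
    simp only [List.length_cons]
    omega

theorem permLength_add_ncyc_le (σ : Perm α) : permLength σ + ncyc σ ≤ Fintype.card α := by
  suffices h : ∀ (n : ℕ) (σ : Perm α), σ.support.card ≤ n →
      permLength σ + ncyc σ ≤ Fintype.card α from h σ.support.card σ le_rfl
  intro n
  induction n with
  | zero =>
    intro σ hσ
    have h1 : σ = 1 := by
      rwa [Nat.le_zero, Equiv.Perm.card_support_eq_zero] at hσ
    subst h1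
    have h0 : permLength (1 : Perm α) = 0 :=
      Nat.le_zero.mp (permLength_le (l := []) (by simp) (by simp))
    rw [h0, zero_add, ncyc_one, Nat.card_eq_fintype_card]
  | succ n ih =>
    intro σ hσ
    by_cases h1 : σ = 1
    · subst h1
      have h0 : permLength (1 : Perm α) = 0 :=
        Nat.le_zero.mp (permLength_le (l := []) (by simp) (by simp))
      rw [h0, zero_add, ncyc_one, Nat.card_eq_fintype_card]
    · obtain ⟨x, hx⟩ : ∃ x, σ x ≠ x := by
        by_contra h
        push_neg at h
        exact h1 (Equiv.ext h)
      set τ := Equiv.swap x (σ x) * σ with hτdef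
      have hsupp : τ.support ⊆ σ.support.erase x := by
        intro y hy
        rw [Equiv.Perm.mem_support] at hy
        rw [Finset.mem_erase, Equiv.Perm.mem_support]
        constructor
        · rintro rfl
          apply hy
          rw [hτdef, Equiv.Perm.mul_apply, Equiv.swap_apply_right]
        · intro hσy
          apply hy
          rw [hτdef, Equiv.Perm.mul_apply, hσy]
          rcases eq_or_ne y x with rfl | hyx
          · exact absurd hσy hx
          · rw [Equiv.swap_apply_of_ne_of_ne hyx (fun h => hx (σ.injective (show σ (σ x) = σ x by rw [← h, hσy])))]
      have hcard : τ.support.card ≤ n := by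
        have h2 := Finset.card_le_card hsupp
        have h3 : (σ.support.erase x).card < σ.support.card :=
          Finset.card_erase_lt_of_mem (Equiv.Perm.mem_support.mpr hx)
        omega
      have hrec := ih τ hcard
      have hlen : permLength σ ≤ permLength τ + 1 := by
        obtain ⟨l, hl, hsw, hp⟩ := exists_list_permLength τ
        have hprod : (Equiv.swap x (σ x) :: l).prod = σ := by
          rw [List.prod_cons, hp, hτdef, ← mul_assoc, Equiv.swap_mul_self, one_mul]
        have := permLength_le (l := Equiv.swap x (σ x) :: l) ?_ hprod
        · simpa [hl] using this
        · intro t ht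
          rcases List.mem_cons.mp ht with rfl | htl
          · exact ⟨x, σ x, Ne.symm hx, rfl⟩
          · exact hsw t htl
      have hnc : ncyc σ + 1 ≤ ncyc τ := ncyc_add_one_le_swap_mul hx
      omega

theorem permLength_add_ncyc (σ : Perm α) : permLength σ + ncyc σ = Fintype.card α := by
  refine le_antisymm (permLength_add_ncyc_le σ) ?_
  obtain ⟨l, hl, hs, hp⟩ := exists_list_permLength σ
  have := card_le_length_add_ncyc l hs
  rw [hl, hp] at this
  exact this

end Formula

section SumCongr
variable {β γ : Type*} [DecidableEq β] [Fintype β] [DecidableEq γ] [Fintype γ]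

theorem sumCongr_zpow (a : Perm β) (b : Perm γ) (n : ℤ) :
    (Equiv.sumCongr a b : Perm (β ⊕ γ)) ^ n = Equiv.sumCongr (a ^ n) (b ^ n) := by
  have h1 : (Equiv.sumCongr a b : Perm (β ⊕ γ)) = Equiv.Perm.sumCongrHom β γ (a, b) := rfl
  rw [h1, ← map_zpow]
  rfl

theorem ncyc_sumCongr_le (a : Perm β) (b : Perm γ) :
    ncyc (Equiv.sumCongr a b : Perm (β ⊕ γ)) ≤ ncyc a + ncyc b := by
  have h1 : ∀ u v : β, a.SameCycle u v →
      Equiv.Perm.SameCycle (Equiv.sumCongr a b : Perm (β ⊕ γ)) (Sum.inl u) (Sum.inl v) := by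
    rintro u v ⟨n, hn⟩
    exact ⟨n, by rw [sumCongr_zpow]; simp [hn]⟩
  have h2 : ∀ u v : γ, b.SameCycle u v →
      Equiv.Perm.SameCycle (Equiv.sumCongr a b : Perm (β ⊕ γ)) (Sum.inr u) (Sum.inr v) := by
    rintro u v ⟨n, hn⟩
    exact ⟨n, by rw [sumCongr_zpow]; simp [hn]⟩
  set g : Quotient (SameCycle.setoid a) ⊕ Quotient (SameCycle.setoid b) →
      Quotient (SameCycle.setoid (Equiv.sumCongr a b : Perm (β ⊕ γ))) :=
    Sum.elim (@Quotient.map _ _ (SameCycle.setoid a) _ Sum.inl h1)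
      (@Quotient.map _ _ (SameCycle.setoid b) _ Sum.inr h2) with hg
  have hsurj : Function.Surjective g := by
    intro z
    induction z using Quotient.ind with | _ w =>
    rcases w with u | u
    · exact ⟨Sum.inl ⟦u⟧, rfl⟩
    · exact ⟨Sum.inr ⟦u⟧, rfl⟩
  have := Nat.card_le_card_of_surjective g hsurj
  rwa [Nat.card_sum] at this

theorem permLength_sumCongr_le (a : Perm β) (b : Perm γ) :
    permLength (Equiv.sumCongr a b : Perm (β ⊕ γ)) ≤ permLength a + permLength b := by
  obtain ⟨l₁, hl₁, hs₁, hp₁⟩ := exists_list_permLength a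
  obtain ⟨l₂, hl₂, hs₂, hp₂⟩ := exists_list_permLength b
  set f₁ : Perm β → Perm (β ⊕ γ) := fun t => Equiv.sumCongr t 1 with hf₁
  set f₂ : Perm γ → Perm (β ⊕ γ) := fun t => Equiv.sumCongr 1 t with hf₂
  have hh₁ : (l₁.map f₁).prod = Equiv.sumCongr a 1 := by
    have := List.prod_hom l₁ ((Equiv.Perm.sumCongrHom β γ).comp (MonoidHom.inl (Perm β) (Perm γ)))
    have hfun1 : ⇑((Equiv.Perm.sumCongrHom β γ).comp (MonoidHom.inl (Perm β) (Perm γ))) = f₁ := by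
      funext t; rfl
    rw [hfun1, hp₁] at this
    exact this
  have hh₂ : (l₂.map f₂).prod = Equiv.sumCongr 1 b := by
    have := List.prod_hom l₂ ((Equiv.Perm.sumCongrHom β γ).comp (MonoidHom.inr (Perm β) (Perm γ)))
    have hfun2 : ⇑((Equiv.Perm.sumCongrHom β γ).comp (MonoidHom.inr (Perm β) (Perm γ))) = f₂ := by
      funext t; rfl
    rw [hfun2, hp₂] at this
    exact this
  have hprod : ((l₁.map f₁) ++ (l₂.map f₂)).prod = Equiv.sumCongr a b := by
    rw [List.prod_append, hh₁, hh₂, Equiv.Perm.sumCongr_mul, mul_one, one_mul]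
  have hle := permLength_le (l := (l₁.map f₁) ++ (l₂.map f₂)) ?_ hprod
  · simpa [hl₁, hl₂] using hle
  · intro t ht
    rcases List.mem_append.mp ht with h | h
    · obtain ⟨u, hu, rfl⟩ := List.mem_map.mp h
      obtain ⟨i, j, hij, rfl⟩ := hs₁ u hu
      exact ⟨Sum.inl i, Sum.inl j, by simp [hij], by simp [hf₁]⟩
    · obtain ⟨u, hu, rfl⟩ := List.mem_map.mp h
      obtain ⟨i, j, hij, rfl⟩ := hs₂ u hu
      exact ⟨Sum.inr i, Sum.inr j, by simp [hij], by simp [hf₂]⟩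

end SumCongr

theorem permLength_sumCongr_self {p : ℕ} (σ : Perm (Fin p)) :
    permLength (Equiv.sumCongr σ σ⁻¹ : Perm (Fin p ⊕ Fin p)) = 2 * permLength σ := by
  have h1 := permLength_add_ncyc (Equiv.sumCongr σ σ⁻¹ : Perm (Fin p ⊕ Fin p))
  have h2 := permLength_add_ncyc σ
  have h3 := permLength_add_ncyc σ⁻¹
  have h4 := ncyc_sumCongr_le σ σ⁻¹
  have h5 : permLength σ⁻¹ = permLength σ := permLength_inv σ
  have h6 := permLength_sumCongr_le σ σ⁻¹
  have h7 : Fintype.card (Fin p ⊕ Fin p) = Fintype.card (Fin p) + Fintype.card (Fin p) := by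
    simp
  omega

theorem exists_decomp {p : ℕ} (π : Equiv.Perm (PMSet p)) (hπinv : Function.Involutive π)
    (hπ : ∀ x, π x ≠ x) :
    ∃ (σ : Equiv.Perm (Fin p)) (ε : Equiv.Perm (PMSet p)), IsEps ε ∧
      π = ε * (embPos σ * deltaPerm p * (embPos σ)⁻¹) * ε := by
  classical
  set δ := deltaPerm p with hδdef
  set ρ := δ * π with hρdef
  have hδapp : ∀ x : PMSet p, δ (δ x) = x := by rintro (k | k) <;> rfl
  have hδinl : ∀ k : Fin p, δ (Sum.inl k) = Sum.inr k := fun k => rfl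
  have hδinr : ∀ k : Fin p, δ (Sum.inr k) = Sum.inl k := fun k => rfl
  have hδne : ∀ x : PMSet p, δ x ≠ x := by rintro (k | k) h <;> simp [hδdef, deltaPerm] at h
  have hππ : ∀ x, π (π x) = x := hπinv
  have hπsq : π * π = 1 := Equiv.ext hππ
  have hδsq : δ * δ = 1 := Equiv.ext hδapp
  have hπinv' : π⁻¹ = π := inv_eq_of_mul_eq_one_right hπsq
  have hδinv : δ⁻¹ = δ := inv_eq_of_mul_eq_one_right hδsq
  have hρρ : δ * ρ * δ = ρ⁻¹ := by
    rw [hρdef, mul_inv_rev, hπinv', hδinv, ← mul_assoc, hδsq, one_mul]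
  have hconj : ∀ n : ℤ, δ * ρ ^ n * δ = ρ ^ (-n) := by
    intro n
    have h1 := map_zpow (MulAut.conj δ) ρ n
    simp only [MulAut.conj_apply, hδinv] at h1
    rw [h1, hρρ, inv_zpow, zpow_neg]
  have hdapp : ∀ (n : ℤ) (x : PMSet p), δ ((ρ ^ n) x) = (ρ ^ (-n)) (δ x) := by
    intro n x
    have := congrArg (fun g : Equiv.Perm (PMSet p) => g (δ x)) (hconj n)
    simp only [Equiv.Perm.mul_apply] at this
    rwa [hδapp] at this
  have hπρ : ∀ y, π y = δ (ρ y) := by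
    intro y
    rw [hρdef, Equiv.Perm.mul_apply, hδapp]
  have hkey : ∀ x, ¬ Equiv.Perm.SameCycle ρ x (δ x) := by
    rintro x ⟨n, hn⟩
    rcases Int.even_or_odd n with ⟨i, hi⟩ | ⟨i, hi⟩
    · apply hδne ((ρ ^ i) x)
      rw [hdapp i x, ← hn, ← Equiv.Perm.mul_apply, ← zpow_add,
        show -i + n = i by omega]
    · apply hπ ((ρ ^ i) x)
      have h2 : ρ ((ρ ^ i) x) = (ρ ^ (i + 1)) x := by
        conv_rhs => rw [show i + 1 = 1 + i by omega, zpow_add, zpow_one]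
        rfl
      have e1 : π ((ρ ^ i) x) = δ ((ρ ^ (i + 1)) x) := (hπρ _).trans (congrArg δ h2)
      rw [e1, hdapp (i + 1) x, ← hn, ← Equiv.Perm.mul_apply, ← zpow_add,
        show -(i + 1) + n = i by omega]
  set r : PMSet p → PMSet p → Prop := fun x y =>
    Equiv.Perm.SameCycle ρ x y ∨ Equiv.Perm.SameCycle ρ x (δ y) with hr
  have hscd : ∀ x y, Equiv.Perm.SameCycle ρ x y → Equiv.Perm.SameCycle ρ (δ x) (δ y) := by
    rintro x y ⟨n, hn⟩
    exact ⟨-n, by rw [← hdapp n x, hn]⟩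
  have hequiv : Equivalence r := by
    constructor
    · intro x; exact Or.inl (Equiv.Perm.SameCycle.refl ρ x)
    · rintro x y (h | h)
      · exact Or.inl h.symm
      · have h2 := hscd _ _ h.symm
        rw [hδapp] at h2
        exact Or.inr h2
    · rintro x y z (h | h) (g | g)
      · exact Or.inl (h.trans g)
      · exact Or.inr (h.trans g)
      · have g2 := hscd _ _ g
        exact Or.inr (h.trans g2)
      · have g2 := hscd _ _ g
        rw [hδapp] at g2
        exact Or.inl (h.trans g2)
  set s : Setoid (PMSet p) := ⟨r, hequiv⟩ with hs
  set inC : PMSet p → Prop :=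
    fun x => Equiv.Perm.SameCycle ρ x (@Quotient.mk _ s x).out with hinC
  have hrep : ∀ x : PMSet p, r (@Quotient.mk _ s x).out x := fun x => Quotient.mk_out x
  have hmkδ : ∀ x : PMSet p, (@Quotient.mk _ s (δ x)) = @Quotient.mk _ s x :=
    fun x => Quotient.sound (Or.inr (Equiv.Perm.SameCycle.refl ρ (δ x)))
  have hinCδ : ∀ x, inC (δ x) ↔ ¬ inC x := by
    intro x
    simp only [hinC]
    rw [hmkδ x]
    constructor
    · intro h1 h2
      exact hkey x (h2.trans h1.symm)
    · intro h2
      rcases hrep x with h | h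
      · exact absurd h.symm h2
      · exact h.symm
  have hinCρ : ∀ x, inC (ρ x) ↔ inC x := by
    intro x
    have hmk : (@Quotient.mk _ s (ρ x)) = @Quotient.mk _ s x :=
      Quotient.sound (Or.inl (Equiv.Perm.sameCycle_apply_left.mpr (Equiv.Perm.SameCycle.refl ρ x)))
    simp only [hinC]
    rw [hmk]
    exact Equiv.Perm.sameCycle_apply_left
  have hinCπ : ∀ x, inC (π x) ↔ ¬ inC x := by
    intro x
    rw [hπρ, hinCδ, hinCρ]
  set q : Fin p → Prop := fun k => inC (Sum.inl k) with hq
  set c : Fin p → PMSet p := fun k => if q k then Sum.inl k else Sum.inr k with hc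
  have hcC : ∀ k, inC (c k) := by
    intro k
    by_cases h : q k
    · simp only [hc, if_pos h]; exact h
    · simp only [hc, if_neg h]
      have h2 := hinCδ (Sum.inr k)
      rw [hδinr] at h2
      by_contra h3
      exact h (h2.mpr h3)
  have hblkδ : ∀ x : PMSet p, (Sum.elim id id (δ x) : Fin p) = Sum.elim id id x := by
    rintro (k | k) <;> rfl
  have hblkc : ∀ k, (Sum.elim id id (c k) : Fin p) = k := by
    intro k; by_cases h : q k <;> simp [hc, h]
  have hsame : ∀ x y : PMSet p, (Sum.elim id id x : Fin p) = Sum.elim id id y →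
      x = y ∨ y = δ x := by
    rintro (a | a) (b | b) h <;> simp only [Sum.elim_inl, Sum.elim_inr, id] at h <;> subst h
    · exact Or.inl rfl
    · exact Or.inr (hδinl a).symm
    · exact Or.inr (hδinr a).symm
    · exact Or.inl rfl
  have huniqN : ∀ x y : PMSet p, (Sum.elim id id x : Fin p) = Sum.elim id id y →
      ¬ inC x → ¬ inC y → x = y := by
    intro x y h hx hy
    rcases hsame x y h with rfl | rfl
    · rfl
    · exact absurd ((hinCδ x).mpr hx) hy
  set e : PMSet p → PMSet p := fun x => if q (Sum.elim id id x) then δ x else x with he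
  have heinv : Function.Involutive e := by
    intro x
    by_cases h : q (Sum.elim id id x)
    · simp only [he, if_pos h, hblkδ, if_pos h, hδapp]
    · simp only [he, if_neg h]
  set ε : Equiv.Perm (PMSet p) := Function.Involutive.toPerm e heinv with hε
  have hεapp : ∀ x, ε x = e x := fun x => rfl
  have hεIsEps : IsEps ε := by
    intro k
    by_cases h : q k
    · right
      constructor <;> simp only [hεapp, he, Sum.elim_inl, Sum.elim_inr, id, if_pos h, h, if_true] <;> rfl
    · left
      constructor <;> simp only [hεapp, he, Sum.elim_inl, Sum.elim_inr, id, if_neg h, h, if_false]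
  have hεinl : ∀ k, ε (Sum.inl k) = δ (c k) := by
    intro k
    by_cases h : q k <;>
      simp only [hεapp, he, hc, Sum.elim_inl, id, if_pos, if_neg, h, if_true, if_false] <;>
      try rfl
  have hεinr : ∀ k, ε (Sum.inr k) = c k := by
    intro k
    by_cases h : q k <;>
      simp only [hεapp, he, hc, Sum.elim_inr, id, if_pos, if_neg, h, if_true, if_false] <;> rfl
  set s0 : Fin p → Fin p := fun k => Sum.elim id id (π (c k)) with hs0
  have hncπ : ∀ k, ¬ inC (π (c k)) := fun k hh => ((hinCπ (c k)).mp hh) (hcC k)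
  have hinj : Function.Injective s0 := by
    intro k j h
    have h3 := huniqN (π (c k)) (π (c j)) h (hncπ k) (hncπ j)
    have h4 := π.injective h3
    have h5 := congrArg (Sum.elim (id : Fin p → Fin p) id) h4
    rwa [hblkc, hblkc] at h5
  set σ : Equiv.Perm (Fin p) := Equiv.ofBijective s0 (Finite.injective_iff_bijective.mp hinj)
    with hσ
  have hσapp : ∀ k, σ k = s0 k := fun k => rfl
  have hA : ∀ k, δ (c (σ k)) = π (c k) := by
    intro k
    apply huniqN
    · rw [hblkδ, hblkc]
      exact (hσapp k).symm ▸ rfl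
    · intro hh
      exact ((hinCδ _).mp hh) (hcC (σ k))
    · exact hncπ k
  have hg : ∀ y, π ((ε * embPos σ) y) = (ε * embPos σ) (δ y) := by
    rintro (k | k)
    · have h1 : (ε * embPos σ) (Sum.inl k) = δ (c (σ k)) := by
        simp only [Equiv.Perm.mul_apply, embPos, Equiv.sumCongr_apply, Sum.map_inl]
        exact hεinl (σ k)
      have h2 : (ε * embPos σ) (δ (Sum.inl k)) = c k := by
        rw [hδinl]
        simp only [Equiv.Perm.mul_apply, embPos, Equiv.sumCongr_apply, Sum.map_inr]
        exact hεinr k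
      rw [h1, h2, hA, hππ]
    · have h1 : (ε * embPos σ) (Sum.inr k) = c k := by
        simp only [Equiv.Perm.mul_apply, embPos, Equiv.sumCongr_apply, Sum.map_inr]
        exact hεinr k
      have h2 : (ε * embPos σ) (δ (Sum.inr k)) = δ (c (σ k)) := by
        rw [hδinr]
        simp only [Equiv.Perm.mul_apply, embPos, Equiv.sumCongr_apply, Sum.map_inl]
        exact hεinl (σ k)
      rw [h1, h2, hA]
  refine ⟨σ, ε, hεIsEps, ?_⟩
  have hεsq : ε * ε = 1 := by
    ext x
    simp only [Equiv.Perm.mul_apply, hεapp]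
    exact heinv x
  have hεinv : ε⁻¹ = ε := inv_eq_of_mul_eq_one_right hεsq
  have hmul : π * (ε * embPos σ) = (ε * embPos σ) * δ := by
    ext y
    simpa only [Equiv.Perm.mul_apply] using hg y
  have hπeq : π = (ε * embPos σ) * δ * (ε * embPos σ)⁻¹ := by
    rw [← hmul, mul_assoc, mul_inv_cancel, mul_one]
  rw [hπeq, mul_inv_rev, hεinv]
  simp only [mul_assoc]

theorem isEps_mul_self {p : ℕ} {ε : Equiv.Perm (PMSet p)} (h : IsEps ε) : ε * ε = 1 := by
  ext x
  rcases x with k | k <;> rcases h k with ⟨h1, h2⟩ | ⟨h1, h2⟩ <;>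
    simp [Equiv.Perm.mul_apply, h1, h2]

theorem isEps_delta_comm {p : ℕ} {ε : Equiv.Perm (PMSet p)} (h : IsEps ε) :
    ε * deltaPerm p = deltaPerm p * ε := by
  ext x
  rcases x with k | k <;> rcases h k with ⟨h1, h2⟩ | ⟨h1, h2⟩ <;>
    simp [Equiv.Perm.mul_apply, deltaPerm, h1, h2]

theorem mid_eq {p : ℕ} (σ : Equiv.Perm (Fin p)) :
    (embPos σ * deltaPerm p * (embPos σ)⁻¹) * deltaPerm p
      = (Equiv.sumCongr σ σ⁻¹ : Equiv.Perm (PMSet p)) := by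
  ext x
  rcases x with k | k <;> rfl

theorem decomp_length {p : ℕ} (π : Equiv.Perm (PMSet p)) (σ : Equiv.Perm (Fin p))
    (ε : Equiv.Perm (PMSet p)) (hε : IsEps ε)
    (heq : π = ε * (embPos σ * deltaPerm p * (embPos σ)⁻¹) * ε) :
    permLength (π * deltaPerm p) = 2 * permLength σ := by
  have hεsq := isEps_mul_self hε
  have hεinv : ε⁻¹ = ε := inv_eq_of_mul_eq_one_right hεsq
  have hcomm := isEps_delta_comm hε
  have h1 : π * deltaPerm p = ε * (Equiv.sumCongr σ σ⁻¹ : Equiv.Perm (PMSet p)) * ε⁻¹ := by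
    rw [heq, hεinv]
    calc ε * (embPos σ * deltaPerm p * (embPos σ)⁻¹) * ε * deltaPerm p
        = ε * (embPos σ * deltaPerm p * (embPos σ)⁻¹) * (ε * deltaPerm p) := by
          simp only [mul_assoc]
      _ = ε * (embPos σ * deltaPerm p * (embPos σ)⁻¹) * (deltaPerm p * ε) := by rw [hcomm]
      _ = ε * ((embPos σ * deltaPerm p * (embPos σ)⁻¹) * deltaPerm p) * ε := by
          simp only [mul_assoc]
      _ = ε * (Equiv.sumCongr σ σ⁻¹ : Equiv.Perm (PMSet p)) * ε := by rw [mid_eq]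
  rw [h1, permLength_conj, permLength_sumCongr_self]

/-- Every pairing `π` of `[±p]` can be written as `π = ε σ δ σ⁻¹ ε` with `σ ∈ S_p` and
`ε ∈ ∏_{k=1}^p S({k,−k})`; moreover for any such decomposition, `|πδ| = 2|σ|`. -/
theorem pairing_decomposition {p : ℕ} (π : Equiv.Perm (PMSet p))
    (hπinv : Function.Involutive π) (hπ : ∀ x, π x ≠ x) :
    (∃ (σ : Equiv.Perm (Fin p)) (ε : Equiv.Perm (PMSet p)), IsEps ε ∧
      π = ε * (embPos σ * deltaPerm p * (embPos σ)⁻¹) * ε) ∧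
    (∀ (σ : Equiv.Perm (Fin p)) (ε : Equiv.Perm (PMSet p)), IsEps ε →
      π = ε * (embPos σ * deltaPerm p * (embPos σ)⁻¹) * ε →
      permLength (π * deltaPerm p) = 2 * permLength σ) := by
  constructor
  · exact exists_decomp π hπinv hπ
  · intro σ ε hε heq
    exact decomp_length π σ ε hε heq
end

section
/- Let α ∈ S_p and let π be a pairing of [±p]. Then πδ lies on the geodesic from the identity to αδα⁻¹δ (i.e., |πδ| + |(πδ)⁻¹(αδα⁻¹δ)| = |αδα⁻¹δ|) if and only if there exists a permutation σ ∈ S_p with |σ| + |σ⁻¹α| = |α| such that π = σδσ⁻¹; moreover such σ is unique. -/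
open Equiv Equiv.Perm

set_option linter.unusedSectionVars false
namespace GeodesicAux

variable {β : Type*} [DecidableEq β] [Fintype β]

noncomputable def pl (σ : Equiv.Perm β) : ℕ :=
  sInf {n | ∃ l : List (Equiv.Perm β), l.length = n ∧ (∀ τ ∈ l, τ.IsSwap) ∧ l.prod = σ}

lemma exists_swap_list (f : Perm β) :
    ∃ l : List (Perm β), (∀ τ ∈ l, τ.IsSwap) ∧ l.prod = f := by
  obtain ⟨l, hl1, hl2⟩ := (truncSwapFactors f).out
  exact ⟨l, hl2, hl1⟩

lemma pl_le {f : Perm β} {l : List (Perm β)} (hs : ∀ τ ∈ l, τ.IsSwap) (hp : l.prod = f) :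
    pl f ≤ l.length :=
  Nat.sInf_le ⟨l, rfl, hs, hp⟩

lemma pl_spec (f : Perm β) :
    ∃ l : List (Perm β), (∀ τ ∈ l, τ.IsSwap) ∧ l.prod = f ∧ l.length = pl f := by
  have hne : {n | ∃ l : List (Equiv.Perm β), l.length = n ∧ (∀ τ ∈ l, τ.IsSwap) ∧ l.prod = f}.Nonempty := by
    obtain ⟨l, h1, h2⟩ := exists_swap_list f
    exact ⟨l.length, l, rfl, h1, h2⟩
  obtain ⟨l, h1, h2, h3⟩ := Nat.sInf_mem hne
  exact ⟨l, h2, h3, h1⟩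

lemma pl_one : pl (1 : Perm β) = 0 :=
  Nat.le_zero.mp (pl_le (l := []) (by simp) (by simp))

lemma pl_mul_le (f g : Perm β) : pl (f * g) ≤ pl f + pl g := by
  obtain ⟨l1, h1s, h1p, h1l⟩ := pl_spec f
  obtain ⟨l2, h2s, h2p, h2l⟩ := pl_spec g
  have := pl_le (f := f * g) (l := l1 ++ l2) (by
    intro τ hτ; rcases List.mem_append.mp hτ with h | h
    · exact h1s τ h
    · exact h2s τ h) (by rw [List.prod_append, h1p, h2p])
  simpa [h1l, h2l] using this

lemma pl_inv_le (f : Perm β) : pl f⁻¹ ≤ pl f := by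
  obtain ⟨l, hs, hp, hl⟩ := pl_spec f
  have := pl_le (f := f⁻¹) (l := (l.map fun x => x⁻¹).reverse) (by
    intro τ hτ
    simp only [List.mem_reverse, List.mem_map] at hτ
    obtain ⟨σ, hσ, rfl⟩ := hτ
    obtain ⟨a, b, hab, rfl⟩ := hs σ hσ
    exact ⟨a, b, hab, by rw [Equiv.swap_inv]⟩) (by rw [← List.prod_inv_reverse, hp])
  simpa [hl] using this

lemma pl_inv (f : Perm β) : pl f⁻¹ = pl f :=
  le_antisymm (pl_inv_le f) (by simpa using pl_inv_le f⁻¹)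

lemma pl_conj_le (f h : Perm β) : pl (h * f * h⁻¹) ≤ pl f := by
  obtain ⟨l, hs, hp, hl⟩ := pl_spec f
  have := pl_le (f := h * f * h⁻¹) (l := l.map fun x => h * x * h⁻¹) (by
    intro τ hτ
    simp only [List.mem_map] at hτ
    obtain ⟨σ, hσ, rfl⟩ := hτ
    obtain ⟨a, b, hab, rfl⟩ := hs σ hσ
    exact ⟨h a, h b, fun hc => hab (h.injective hc), (Equiv.swap_apply_apply h a b).symm⟩)
    (by
      have key : ∀ L : List (Perm β), (L.map fun x => h * x * h⁻¹).prod = h * L.prod * h⁻¹ := by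
        intro L; induction L with
        | nil => simp
        | cons t L ih => simp only [List.map_cons, List.prod_cons, ih]; group
      rw [key, hp])
  simpa [hl] using this

lemma pl_conj (f h : Perm β) : pl (h * f * h⁻¹) = pl f := by
  refine le_antisymm (pl_conj_le f h) ?_
  have := pl_conj_le (h * f * h⁻¹) h⁻¹
  simpa [mul_assoc] using this

end GeodesicAux
namespace GeodesicAux

variable {β : Type*} [DecidableEq β] [Fintype β]

/-- The join of the cycle-relation of `g` with the extra pair `{a, b}`. -/
def Rrel (g : Perm β) (a b : β) (x z : β) : Prop :=
  g.SameCycle x z ∨ (g.SameCycle x a ∧ g.SameCycle b z) ∨ (g.SameCycle x b ∧ g.SameCycle a z)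

lemma Rrel_refl (g : Perm β) (a b x : β) : Rrel g a b x x := Or.inl (SameCycle.refl g x)

lemma Rrel_symm {g : Perm β} {a b x z : β} (h : Rrel g a b x z) : Rrel g a b z x := by
  rcases h with h | ⟨h1, h2⟩ | ⟨h1, h2⟩
  · exact Or.inl h.symm
  · exact Or.inr (Or.inr ⟨h2.symm, h1.symm⟩)
  · exact Or.inr (Or.inl ⟨h2.symm, h1.symm⟩)

lemma Rrel_trans {g : Perm β} {a b x z w : β} (h : Rrel g a b x z) (h' : Rrel g a b z w) :
    Rrel g a b x w := by
  rcases h with h | ⟨h1, h2⟩ | ⟨h1, h2⟩ <;> rcases h' with h' | ⟨h1', h2'⟩ | ⟨h1', h2'⟩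
  · exact Or.inl (h.trans h')
  · exact Or.inr (Or.inl ⟨h.trans h1', h2'⟩)
  · exact Or.inr (Or.inr ⟨h.trans h1', h2'⟩)
  · exact Or.inr (Or.inl ⟨h1, h2.trans h'⟩)
  · exact Or.inr (Or.inl ⟨h1, h2'⟩)
  · exact Or.inl (h1.trans h2')
  · exact Or.inr (Or.inr ⟨h1, h2.trans h'⟩)
  · exact Or.inl (h1.trans h2')
  · exact Or.inr (Or.inr ⟨h1, h2'⟩)

lemma Rrel_step (g : Perm β) (a b x : β) : Rrel g a b x ((Equiv.swap a b * g) x) := by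
  rw [Equiv.Perm.mul_apply]
  by_cases h1 : g x = a
  · rw [h1, Equiv.swap_apply_left]
    exact Or.inr (Or.inl ⟨⟨1, by simpa using h1⟩, SameCycle.refl g b⟩)
  by_cases h2 : g x = b
  · rw [h2, Equiv.swap_apply_right]
    exact Or.inr (Or.inr ⟨⟨1, by simpa using h2⟩, SameCycle.refl g a⟩)
  · rw [Equiv.swap_apply_of_ne_of_ne h1 h2]
    exact Or.inl ⟨1, by simp⟩

/-- (E1): the cycle relation of `swap a b * g` is contained in the join `Rrel g a b`. -/
lemma sameCycle_swap_mul_sub {g : Perm β} {a b x z : β}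
    (h : (Equiv.swap a b * g).SameCycle x z) : Rrel g a b x z := by
  obtain ⟨i, hi⟩ := h
  subst hi
  set t := Equiv.swap a b * g with ht
  have key : ∀ i : ℤ, ∀ x : β, Rrel g a b x ((t ^ i) x) := by
    intro i
    induction i using Int.induction_on with
    | zero => intro x; simpa using Rrel_refl g a b x
    | succ n ih =>
      intro x
      have : (t ^ ((n : ℤ) + 1)) x = (t ^ (n : ℤ)) (t x) := by
        rw [zpow_add_one]; rfl
      rw [this]
      exact Rrel_trans (Rrel_step g a b x) (ih (t x))
    | pred n ih =>
      intro x
      have : (t ^ (-(n : ℤ) - 1)) x = (t ^ (-(n : ℤ))) (t⁻¹ x) := by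
        rw [sub_eq_add_neg, zpow_add, zpow_neg_one]; rfl
      rw [this]
      refine Rrel_trans ?_ (ih (t⁻¹ x))
      have := Rrel_step g a b (t⁻¹ x)
      rw [← ht, Equiv.Perm.inv_def, Equiv.apply_symm_apply] at this
      exact Rrel_symm this
  exact key i x

/-- (T2): splitting refines: if `a, b` are on the same `g`-cycle, cycles of `swap a b * g`
refine those of `g`. -/
lemma sameCycle_of_swap_mul {g : Perm β} {a b : β} (hab : g.SameCycle a b) {x z : β}
    (h : (Equiv.swap a b * g).SameCycle x z) : g.SameCycle x z := by
  rcases sameCycle_swap_mul_sub h with h | ⟨h1, h2⟩ | ⟨h1, h2⟩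
  · exact h
  · exact (h1.trans hab).trans h2
  · exact (h1.trans hab.symm).trans h2

/-- (T3): if `a, b` are on different `g`-cycles then `swap a b * g` merges them. -/
lemma swap_mul_sameCycle_ends {g : Perm β} {a b : β} (hab : ¬ g.SameCycle a b) :
    (Equiv.swap a b * g).SameCycle a b := by
  have hexists : ∃ n : ℕ, 0 < n ∧ (g ^ n) a = a :=
    ⟨orderOf g, orderOf_pos g, by rw [pow_orderOf_eq_one]; rfl⟩
  obtain ⟨hm0, hma⟩ := Nat.find_spec hexists
  set m := Nat.find hexists with hm
  have key : ∀ j, j < m → ((Equiv.swap a b * g) ^ j) a = (g ^ j) a := by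
    intro j
    induction j with
    | zero => simp
    | succ j ih =>
      intro hj
      have hj' : j < m := Nat.lt_of_succ_lt hj
      rw [pow_succ', Equiv.Perm.mul_apply, ih hj', Equiv.Perm.mul_apply,
        ← Equiv.Perm.mul_apply g (g ^ j), ← pow_succ']
      have hne1 : (g ^ (j + 1)) a ≠ a := by
        intro hcon
        exact Nat.find_min hexists hj ⟨Nat.succ_pos j, hcon⟩
      have hne2 : (g ^ (j + 1)) a ≠ b := by
        intro hcon
        exact hab ⟨(j + 1 : ℕ), by rw [zpow_natCast]; exact hcon⟩
      exact Equiv.swap_apply_of_ne_of_ne hne1 hne2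
  refine ⟨(m : ℤ), ?_⟩
  rw [zpow_natCast]
  have hm1 : m - 1 < m := Nat.sub_lt hm0 one_pos
  have hsucc : m = (m - 1) + 1 := (Nat.succ_pred_eq_of_pos hm0).symm
  have : ((Equiv.swap a b * g) ^ m) a = Equiv.swap a b ((g ^ m) a) := by
    conv_lhs => rw [hsucc]
    rw [pow_succ', Equiv.Perm.mul_apply, key (m - 1) hm1, Equiv.Perm.mul_apply,
      ← Equiv.Perm.mul_apply g (g ^ (m - 1)), ← pow_succ', ← hsucc]
  rw [this, hma, Equiv.swap_apply_left]

/-- (T4): merging is monotone: if `a, b` are on different `g`-cycles, the cycles of `g`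
are contained in those of `swap a b * g`. -/
lemma sameCycle_swap_mul_of_not {g : Perm β} {a b : β} (hab : ¬ g.SameCycle a b) {x z : β}
    (h : g.SameCycle x z) : (Equiv.swap a b * g).SameCycle x z := by
  have h2 : (Equiv.swap a b * g).SameCycle a b := swap_mul_sameCycle_ends hab
  have hg : g = Equiv.swap a b * (Equiv.swap a b * g) := by
    rw [← mul_assoc, Equiv.swap_mul_self, one_mul]
  have h3 : (Equiv.swap a b * (Equiv.swap a b * g)).SameCycle x z := hg ▸ h
  rcases sameCycle_swap_mul_sub h3 with h' | ⟨h1', h2'⟩ | ⟨h1', h2'⟩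
  · exact h'
  · exact (h1'.trans h2).trans h2'
  · exact (h1'.trans h2.symm).trans h2'

end GeodesicAux
namespace GeodesicAux

variable {β : Type*} [DecidableEq β] [Fintype β]

def scSetoid (f : Perm β) : Setoid β :=
  ⟨f.SameCycle, ⟨fun x => SameCycle.refl f x, SameCycle.symm, SameCycle.trans⟩⟩

noncomputable def cycCount (f : Perm β) : ℕ := Nat.card (Quotient (scSetoid f))

def Rsetoid (g : Perm β) (a b : β) : Setoid β :=
  ⟨Rrel g a b, ⟨Rrel_refl g a b, Rrel_symm, Rrel_trans⟩⟩

lemma quot_card_le {r s : Setoid β} (h : ∀ x y, r.r x y → s.r x y) :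
    Nat.card (Quotient s) ≤ Nat.card (Quotient r) := by
  have hsurj : Function.Surjective
      (Quotient.lift (fun x => (Quotient.mk s x : Quotient s))
        (fun x y hxy => Quotient.sound (h x y hxy)) : Quotient r → Quotient s) := by
    intro q
    obtain ⟨x, rfl⟩ := Quotient.exists_rep q
    exact ⟨Quotient.mk r x, rfl⟩
  exact Nat.card_le_card_of_surjective _ hsurj

lemma cycCount_one : cycCount (1 : Perm β) = Nat.card β := by
  have hbij : Function.Bijective (Quotient.mk (scSetoid (1 : Perm β))) := by
    constructor
    · intro x y hxy
      exact sameCycle_one.mp (Quotient.exact hxy)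
    · intro q
      exact Quotient.exists_rep q
  exact (Nat.card_eq_of_bijective _ hbij).symm

/-- (T7): a non-injective surjection between finite types drops the cardinality. -/
lemma card_succ_le_of_surj {A B : Type*} [Finite A] (φ : A → B) (hφ : Function.Surjective φ)
    {u v : A} (huv : u ≠ v) (he : φ u = φ v) : Nat.card B + 1 ≤ Nat.card A := by
  classical
  have _ : Finite B := Finite.of_surjective φ hφ
  set s := Function.surjInv hφ with hsdef
  have hs : ∀ b, φ (s b) = b := fun b => Function.surjInv_eq hφ b
  have hsinj : Function.Injective s := by
    intro b b' hbb'
    rw [← hs b, ← hs b', hbb']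
  set w := if s (φ u) = u then v else u with hw
  have hwnr : ∀ b, s b ≠ w := by
    intro b hb
    have hbφ : b = φ u := by rw [← hs b, hb, hw]; split <;> [rw [he]; rfl]
    by_cases hcase : s (φ u) = u
    · have : w = v := by rw [hw, if_pos hcase]
      rw [hbφ, hcase] at hb
      exact huv (this ▸ hb ▸ rfl)
    · have : w = u := by rw [hw, if_neg hcase]
      rw [hbφ] at hb
      exact hcase (by rw [hb, this])
  have hinj : Function.Injective (fun o : Option B => o.elim w s) := by
    intro o o' hoo'
    cases o with
    | none => cases o' with
      | none => rfl
      | some b => exact absurd hoo'.symm (hwnr b)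
    | some b => cases o' with
      | none => exact absurd hoo' (hwnr b)
      | some b' => exact congrArg _ (hsinj hoo')
  have := Nat.card_le_card_of_injective _ hinj
  rwa [Finite.card_option] at this

/-- (T1): multiplying by a swap changes the cycle count by at most one (downwards). -/
lemma cycCount_le_swap_mul_succ (g : Perm β) (a b : β) :
    cycCount g ≤ cycCount (Equiv.swap a b * g) + 1 := by
  classical
  -- step 1 : card (Quotient (Rsetoid g a b)) ≤ cycCount (swap a b * g)
  have h1 : Nat.card (Quotient (Rsetoid g a b)) ≤ cycCount (Equiv.swap a b * g) :=
    quot_card_le (fun x y h => sameCycle_swap_mul_sub h)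
  -- step 2 : cycCount g ≤ card (Quotient (Rsetoid g a b)) + 1
  have h2 : cycCount g ≤ Nat.card (Quotient (Rsetoid g a b)) + 1 := by
    have hwd : ∀ x y : β, (scSetoid g).r x y →
        (if g.SameCycle a x then (none : Option (Quotient (Rsetoid g a b)))
          else some (Quotient.mk _ x)) =
        (if g.SameCycle a y then none else some (Quotient.mk _ y)) := by
      intro x y hxy
      by_cases hax : g.SameCycle a x
      · rw [if_pos hax, if_pos (hax.trans hxy)]
      · rw [if_neg hax, if_neg (fun hay => hax (hay.trans hxy.symm))]
        exact congrArg some (Quotient.sound (Or.inl hxy))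
    have hinj : Function.Injective
        (Quotient.lift _ hwd : Quotient (scSetoid g) → Option (Quotient (Rsetoid g a b))) := by
      intro q q' hqq'
      obtain ⟨x, rfl⟩ := Quotient.exists_rep q
      obtain ⟨y, rfl⟩ := Quotient.exists_rep q'
      simp only [Quotient.lift_mk] at hqq'
      by_cases hax : g.SameCycle a x <;> by_cases hay : g.SameCycle a y
      · exact Quotient.sound (hax.symm.trans hay)
      · rw [if_pos hax, if_neg hay] at hqq'; exact absurd hqq' (by simp)
      · rw [if_neg hax, if_pos hay] at hqq'; exact absurd hqq' (by simp)
      · rw [if_neg hax, if_neg hay] at hqq'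
        have hR : Rrel g a b x y := Quotient.exact (Option.some_injective _ hqq')
        rcases hR with h | ⟨h1', h2'⟩ | ⟨h1', h2'⟩
        · exact Quotient.sound h
        · exact absurd h1'.symm hax
        · exact absurd h2' hay
    have := Nat.card_le_card_of_injective _ hinj
    rwa [Finite.card_option] at this
  omega

/-- (T6): multiplying by the swap `(x, f x)` strictly increases the cycle count. -/
lemma cycCount_succ_le_swap_mul {f : Perm β} {x : β} (hx : f x ≠ x) :
    cycCount f + 1 ≤ cycCount (Equiv.swap x (f x) * f) := by
  have hs : f.SameCycle x (f x) := ⟨1, by simp⟩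
  set g := Equiv.swap x (f x) * f with hg
  have hsub : ∀ u v : β, (scSetoid g).r u v → (scSetoid f).r u v := fun u v h =>
    sameCycle_of_swap_mul hs h
  have hfix : g x = x := by
    rw [hg, Equiv.Perm.mul_apply, Equiv.swap_apply_right]
  have hfixpow : ∀ i : ℤ, (g ^ i) x = x := fun i => by
    induction i using Int.induction_on with
    | zero => simp
    | succ n ih =>
      rw [show (g ^ ((n : ℤ) + 1)) x = (g ^ (n : ℤ)) (g x) from by rw [zpow_add_one]; rfl,
        hfix, ih]
    | pred n ih =>
      rw [show (g ^ (-(n : ℤ) - 1)) x = (g ^ (-(n : ℤ))) (g⁻¹ x) from by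
          rw [sub_eq_add_neg, zpow_add, zpow_neg_one]; rfl]
      have : g⁻¹ x = x := by
        apply g.injective; rw [Equiv.Perm.inv_def, Equiv.apply_symm_apply, hfix]
      rw [this, ih]
  have hnsc : ¬ g.SameCycle x (f x) := by
    rintro ⟨i, hi⟩
    rw [hfixpow i] at hi
    exact hx hi.symm
  -- the induced surjection from cycles of g to cycles of f
  have hsurj : Function.Surjective
      (Quotient.lift (fun z => (Quotient.mk (scSetoid f) z : Quotient (scSetoid f)))
        (fun u v huv => Quotient.sound (hsub u v huv)) :
        Quotient (scSetoid g) → Quotient (scSetoid f)) := by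
    intro q
    obtain ⟨z, rfl⟩ := Quotient.exists_rep q
    exact ⟨Quotient.mk _ z, rfl⟩
  have hne : (Quotient.mk (scSetoid g) x) ≠ (Quotient.mk (scSetoid g) (f x)) := by
    intro hcon
    exact hnsc (Quotient.exact hcon)
  have heq : (Quotient.lift (fun z => (Quotient.mk (scSetoid f) z : Quotient (scSetoid f)))
        (fun u v huv => Quotient.sound (hsub u v huv)) :
        Quotient (scSetoid g) → Quotient (scSetoid f)) (Quotient.mk _ x)
      = (Quotient.lift (fun z => (Quotient.mk (scSetoid f) z : Quotient (scSetoid f)))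
        (fun u v huv => Quotient.sound (hsub u v huv))) (Quotient.mk _ (f x)) :=
    Quotient.sound hs
  exact card_succ_le_of_surj _ hsurj hne heq

end GeodesicAux
namespace GeodesicAux

variable {β : Type*} [DecidableEq β] [Fintype β]

/-- (P1/P2): lower bound for lists of swaps, with equality-case analysis. -/
lemma lower_bound_aux (l : List (Perm β)) (hl : ∀ τ ∈ l, τ.IsSwap) :
    Nat.card β ≤ cycCount l.prod + l.length ∧
      (Nat.card β = cycCount l.prod + l.length →
        ∀ τ ∈ l, ∀ z, l.prod.SameCycle z (τ z)) := by
  induction l with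
  | nil =>
    simp only [List.prod_nil, List.length_nil, cycCount_one, add_zero, le_refl, true_and]
    intro _ τ hτ
    exact absurd hτ List.not_mem_nil
  | cons t l' ih =>
    have hts : t.IsSwap := hl t List.mem_cons_self
    have hl's : ∀ τ ∈ l', τ.IsSwap := fun τ hτ => hl τ (List.mem_cons_of_mem t hτ)
    obtain ⟨a, b, hab, rfl⟩ := hts
    obtain ⟨ih1, ih2⟩ := ih hl's
    have hprod : (Equiv.swap a b :: l').prod = Equiv.swap a b * l'.prod := List.prod_cons
    have hT1 : cycCount l'.prod ≤ cycCount (Equiv.swap a b * l'.prod) + 1 :=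
      cycCount_le_swap_mul_succ l'.prod a b
    constructor
    · rw [hprod, List.length_cons]
      omega
    · intro heq
      rw [hprod, List.length_cons] at heq
      have hcc : cycCount l'.prod = cycCount (Equiv.swap a b * l'.prod) + 1 := by omega
      -- the split case is impossible
      have hnsc : ¬ l'.prod.SameCycle a b := by
        intro hsc
        have : cycCount l'.prod ≤ cycCount (Equiv.swap a b * l'.prod) :=
          quot_card_le (fun x y h => sameCycle_of_swap_mul hsc h)
        omega
      have hends : (Equiv.swap a b * l'.prod).SameCycle a b := swap_mul_sameCycle_ends hnsc
      have hmono : ∀ x z, l'.prod.SameCycle x z → (Equiv.swap a b * l'.prod).SameCycle x z :=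
        fun x z h => sameCycle_swap_mul_of_not hnsc h
      intro τ hτ z
      rw [hprod]
      rcases List.mem_cons.mp hτ with rfl | hτ'
      · by_cases hza : z = a
        · subst hza; rw [Equiv.swap_apply_left]; exact hends
        by_cases hzb : z = b
        · subst hzb; rw [Equiv.swap_apply_right]; exact hends.symm
        · rw [Equiv.swap_apply_of_ne_of_ne hza hzb]
      · have hl'eq : Nat.card β = cycCount l'.prod + l'.length := by omega
        exact hmono _ _ (ih2 hl'eq τ hτ' z)

/-- Upper bound: `cycCount f + pl f ≤ |β|`. -/
lemma upper_bound (f : Perm β) : cycCount f + pl f ≤ Nat.card β := by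
  suffices H : ∀ n : ℕ, ∀ f : Perm β, f.support.card ≤ n → cycCount f + pl f ≤ Nat.card β by
    exact H f.support.card f le_rfl
  intro n
  induction n with
  | zero =>
    intro f hf
    have : f = 1 := by
      rw [← Equiv.Perm.support_eq_empty_iff]
      exact Finset.card_eq_zero.mp (Nat.le_zero.mp hf)
    subst this
    rw [cycCount_one, pl_one, add_zero]
  | succ n ih =>
    intro f hf
    by_cases h1 : f = 1
    · subst h1; rw [cycCount_one, pl_one, add_zero]
    · have : ¬ ∀ x, f x = x := fun h => h1 (Equiv.ext h)
      push_neg at this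
      obtain ⟨x, hx⟩ := this
      set g := Equiv.swap x (f x) * f with hg
      have hcard : g.support.card < f.support.card := Equiv.Perm.card_support_swap_mul hx
      have hgle : g.support.card ≤ n := by
        have := lt_of_lt_of_le hcard hf
        omega
      have hIH := ih g hgle
      have hfg : f = Equiv.swap x (f x) * g := by
        rw [hg, ← mul_assoc, Equiv.swap_mul_self, one_mul]
      have hple : pl f ≤ pl g + 1 := by
        obtain ⟨l, hs, hp, hlen⟩ := pl_spec g
        have := pl_le (f := f) (l := Equiv.swap x (f x) :: l) (by
          intro τ hτ
          rcases List.mem_cons.mp hτ with rfl | hτ'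
          · exact ⟨x, f x, Ne.symm hx, rfl⟩
          · exact hs τ hτ') (by rw [List.prod_cons, hp, ← hfg])
        simp only [List.length_cons, hlen] at this
        omega
      have hT6 : cycCount f + 1 ≤ cycCount g := cycCount_succ_le_swap_mul hx
      omega

lemma cycCount_add_pl (f : Perm β) : cycCount f + pl f = Nat.card β := by
  refine le_antisymm (upper_bound f) ?_
  obtain ⟨l, hs, hp, hlen⟩ := pl_spec f
  have := (lower_bound_aux l hs).1
  rw [hp, hlen] at this
  exact this

/-- Every swap in a minimal factorization moves points within cycles of the product. -/
lemma min_list_sameCycle {f : Perm β} {l : List (Perm β)} (hs : ∀ τ ∈ l, τ.IsSwap)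
    (hp : l.prod = f) (hlen : l.length = pl f) : ∀ τ ∈ l, ∀ z, f.SameCycle z (τ z) := by
  have h2 := (lower_bound_aux l hs).2
  rw [hp] at h2
  apply h2
  rw [hlen]
  exact (cycCount_add_pl f).symm

lemma prod_list_sameCycle {y : Perm β} {L : List (Perm β)}
    (h : ∀ τ ∈ L, ∀ z, y.SameCycle z (τ z)) : ∀ z, y.SameCycle z (L.prod z) := by
  induction L with
  | nil => intro z; simpa using SameCycle.refl y z
  | cons τ L' ih =>
    intro z
    rw [List.prod_cons, Equiv.Perm.mul_apply]
    have h1 : ∀ τ' ∈ L', ∀ z, y.SameCycle z (τ' z) := fun τ' hτ' =>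
      h τ' (List.mem_cons_of_mem τ hτ')
    exact (ih h1 z).trans (h τ List.mem_cons_self (L'.prod z))

/-- The geodesic refinement lemma. -/
lemma geodesic_refines {x y : Perm β} (h : pl x + pl (x⁻¹ * y) = pl y) :
    ∀ z, y.SameCycle z (x z) := by
  obtain ⟨l1, h1s, h1p, h1len⟩ := pl_spec x
  obtain ⟨l2, h2s, h2p, h2len⟩ := pl_spec (x⁻¹ * y)
  have hls : ∀ τ ∈ l1 ++ l2, τ.IsSwap := by
    intro τ hτ
    rcases List.mem_append.mp hτ with h' | h'
    · exact h1s τ h'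
    · exact h2s τ h'
  have hlp : (l1 ++ l2).prod = y := by
    rw [List.prod_append, h1p, h2p, ← mul_assoc, mul_inv_cancel, one_mul]
  have hllen : (l1 ++ l2).length = pl y := by
    rw [List.length_append, h1len, h2len, h]
  have hkey := min_list_sameCycle hls hlp hllen
  have h1key : ∀ τ ∈ l1, ∀ z, y.SameCycle z (τ z) := fun τ hτ =>
    hkey τ (List.mem_append.mpr (Or.inl hτ))
  intro z
  rw [← h1p]
  exact prod_list_sameCycle h1key z

end GeodesicAux
set_option linter.unnecessarySimpa false
namespace GeodesicAux

variable {γ₁ γ₂ : Type*} [DecidableEq γ₁] [Fintype γ₁] [DecidableEq γ₂] [Fintype γ₂]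

lemma sc_mul (e g : Perm γ₁) (f h : Perm γ₂) :
    (Equiv.sumCongr e f : Perm (γ₁ ⊕ γ₂)) * Equiv.sumCongr g h = Equiv.sumCongr (e * g) (f * h) :=
  Equiv.Perm.sumCongr_mul e f g h

lemma sc_one : (Equiv.sumCongr (1 : Perm γ₁) (1 : Perm γ₂) : Perm (γ₁ ⊕ γ₂)) = 1 :=
  Equiv.Perm.sumCongr_one

lemma sc_inv (e : Perm γ₁) (f : Perm γ₂) :
    (Equiv.sumCongr e f : Perm (γ₁ ⊕ γ₂))⁻¹ = Equiv.sumCongr e⁻¹ f⁻¹ :=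
  Equiv.Perm.sumCongr_inv e f

lemma sc_swap_one (i j : γ₁) :
    (Equiv.sumCongr (Equiv.swap i j) (1 : Perm γ₂) : Perm (γ₁ ⊕ γ₂)) =
      Equiv.swap (Sum.inl i) (Sum.inl j) :=
  Equiv.Perm.sumCongr_swap_one i j

lemma sc_one_swap (i j : γ₂) :
    (Equiv.sumCongr (1 : Perm γ₁) (Equiv.swap i j) : Perm (γ₁ ⊕ γ₂)) =
      Equiv.swap (Sum.inr i) (Sum.inr j) :=
  Equiv.Perm.sumCongr_one_swap i j

lemma sumCongr_zpow (a : Perm γ₁) (b : Perm γ₂) (i : ℤ) :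
    (Equiv.sumCongr a b : Perm (γ₁ ⊕ γ₂)) ^ i = Equiv.sumCongr (a ^ i) (b ^ i) := by
  have h1 : ((a, b) : Perm γ₁ × Perm γ₂) ^ i = (a ^ i, b ^ i) := by
    ext <;> simp
  have h2 := map_zpow (Equiv.Perm.sumCongrHom γ₁ γ₂) (a, b) i
  rw [h1] at h2
  exact h2.symm.trans rfl

lemma sameCycle_sumCongr_inl {a : Perm γ₁} {b : Perm γ₂} {k : γ₁} {z : γ₁ ⊕ γ₂}
    (h : Equiv.Perm.SameCycle (Equiv.sumCongr a b : Perm (γ₁ ⊕ γ₂)) (Sum.inl k) z) :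
    ∃ m, z = Sum.inl m := by
  obtain ⟨i, hi⟩ := h
  rw [sumCongr_zpow] at hi
  exact ⟨(a ^ i) k, by rw [← hi]; rfl⟩

lemma sameCycle_sumCongr_inr {a : Perm γ₁} {b : Perm γ₂} {k : γ₂} {z : γ₁ ⊕ γ₂}
    (h : Equiv.Perm.SameCycle (Equiv.sumCongr a b : Perm (γ₁ ⊕ γ₂)) (Sum.inr k) z) :
    ∃ m, z = Sum.inr m := by
  obtain ⟨i, hi⟩ := h
  rw [sumCongr_zpow] at hi
  exact ⟨(b ^ i) k, by rw [← hi]; rfl⟩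

lemma pl_sumCongr (a : Perm γ₁) (b : Perm γ₂) :
    pl (Equiv.sumCongr a b : Perm (γ₁ ⊕ γ₂)) = pl a + pl b := by
  refine le_antisymm ?_ ?_
  · -- upper bound: combine factorizations
    obtain ⟨la, has, hap, halen⟩ := pl_spec a
    obtain ⟨lb, hbs, hbp, hblen⟩ := pl_spec b
    have key1 : ∀ (L1 : List (Perm γ₁)),
        ((L1.map fun τ => (Equiv.sumCongr τ 1 : Perm (γ₁ ⊕ γ₂)))).prod =
          Equiv.sumCongr L1.prod (1 : Perm γ₂) := by
      intro L1
      induction L1 with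
      | nil => simpa using sc_one.symm
      | cons τ L ih =>
        rw [List.map_cons, List.prod_cons, List.prod_cons, ih, sc_mul, one_mul]
    have key2 : ∀ (L2 : List (Perm γ₂)),
        ((L2.map fun τ => (Equiv.sumCongr 1 τ : Perm (γ₁ ⊕ γ₂)))).prod =
          Equiv.sumCongr (1 : Perm γ₁) L2.prod := by
      intro L2
      induction L2 with
      | nil => simpa using sc_one.symm
      | cons τ L ih =>
        rw [List.map_cons, List.prod_cons, List.prod_cons, ih, sc_mul, one_mul]
    have := pl_le (f := (Equiv.sumCongr a b : Perm (γ₁ ⊕ γ₂)))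
      (l := (la.map fun τ => (Equiv.sumCongr τ 1 : Perm (γ₁ ⊕ γ₂))) ++
        (lb.map fun τ => (Equiv.sumCongr 1 τ : Perm (γ₁ ⊕ γ₂))))
      (by
        intro τ hτ
        rcases List.mem_append.mp hτ with h' | h' <;>
          simp only [List.mem_map] at h'
        · obtain ⟨σ, hσ, rfl⟩ := h'
          obtain ⟨u, v, huv, rfl⟩ := has σ hσ
          exact ⟨Sum.inl u, Sum.inl v, by simp [huv], sc_swap_one u v⟩
        · obtain ⟨σ, hσ, rfl⟩ := h'
          obtain ⟨u, v, huv, rfl⟩ := hbs σ hσ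
          exact ⟨Sum.inr u, Sum.inr v, by simp [huv], sc_one_swap u v⟩)
      (by
        rw [List.prod_append, key1 la, key2 lb, hap, hbp, sc_mul, mul_one, one_mul])
    simp only [List.length_append, List.length_map, halen, hblen] at this
    exact this
  · -- lower bound: a minimal factorization splits by sides
    obtain ⟨l, hs, hp, hlen⟩ := pl_spec (Equiv.sumCongr a b : Perm (γ₁ ⊕ γ₂))
    have hkey := min_list_sameCycle hs hp hlen
    have hsides : ∀ τ ∈ l, (∃ s : Perm γ₁, s.IsSwap ∧ τ = Equiv.sumCongr s (1 : Perm γ₂)) ∨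
        (∃ s : Perm γ₂, s.IsSwap ∧ τ = Equiv.sumCongr (1 : Perm γ₁) s) := by
      intro τ hτ
      obtain ⟨u, v, huv, rfl⟩ := hs τ hτ
      have hmove := hkey _ hτ u
      rw [Equiv.swap_apply_left] at hmove
      cases u with
      | inl u' =>
        obtain ⟨m, hm⟩ := sameCycle_sumCongr_inl hmove
        subst hm
        refine Or.inl ⟨Equiv.swap u' m, ⟨u', m, by rintro rfl; exact huv rfl, rfl⟩, ?_⟩
        rw [sc_swap_one]
      | inr u' =>
        obtain ⟨m, hm⟩ := sameCycle_sumCongr_inr hmove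
        subst hm
        refine Or.inr ⟨Equiv.swap u' m, ⟨u', m, by rintro rfl; exact huv rfl, rfl⟩, ?_⟩
        rw [sc_one_swap]
    have hsplit : ∀ L : List (Perm (γ₁ ⊕ γ₂)),
        (∀ τ ∈ L, (∃ s : Perm γ₁, s.IsSwap ∧ τ = Equiv.sumCongr s (1 : Perm γ₂)) ∨
          (∃ s : Perm γ₂, s.IsSwap ∧ τ = Equiv.sumCongr (1 : Perm γ₁) s)) →
        ∃ (La : List (Perm γ₁)) (Lb : List (Perm γ₂)),
          (∀ σ ∈ La, σ.IsSwap) ∧ (∀ σ ∈ Lb, σ.IsSwap) ∧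
          La.length + Lb.length = L.length ∧
          (Equiv.sumCongr La.prod Lb.prod : Perm (γ₁ ⊕ γ₂)) = L.prod := by
      intro L
      induction L with
      | nil => exact fun _ => ⟨[], [], by simp, by simp, by simp, by simpa using sc_one⟩
      | cons τ L' ih =>
        intro hL
        obtain ⟨La, Lb, h1, h2, h3, h4⟩ := ih (fun σ hσ => hL σ (List.mem_cons_of_mem τ hσ))
        rcases hL τ List.mem_cons_self with ⟨s, hss, rfl⟩ | ⟨s, hss, rfl⟩
        · refine ⟨s :: La, Lb, ?_, h2, by simp only [List.length_cons, ← h3]; omega, ?_⟩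
          · intro σ hσ
            rcases List.mem_cons.mp hσ with rfl | hσ'
            · exact hss
            · exact h1 σ hσ'
          · rw [List.prod_cons, List.prod_cons, ← h4, sc_mul, one_mul]
        · refine ⟨La, s :: Lb, h1, ?_, by simp only [List.length_cons, ← h3]; omega, ?_⟩
          · intro σ hσ
            rcases List.mem_cons.mp hσ with rfl | hσ'
            · exact hss
            · exact h2 σ hσ'
          · rw [List.prod_cons, List.prod_cons, ← h4, sc_mul, one_mul]
    obtain ⟨La, Lb, h1, h2, h3, h4⟩ := hsplit l hsides
    rw [hp] at h4
    have hpair : La.prod = a ∧ Lb.prod = b := by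
      have := Equiv.Perm.sumCongrHom_injective (α := γ₁) (β := γ₂)
        (a₁ := (La.prod, Lb.prod)) (a₂ := (a, b)) h4
      exact ⟨congrArg Prod.fst this, congrArg Prod.snd this⟩
    calc pl a + pl b ≤ La.length + Lb.length := by
          gcongr
          · exact pl_le h1 hpair.1
          · exact pl_le h2 hpair.2
      _ = l.length := h3
      _ = pl _ := hlen

end GeodesicAux
namespace GeodesicAux

variable {p : ℕ}

lemma permLength_eq_pl {β : Type*} [DecidableEq β] [Fintype β] (f : Perm β) :
    permLength f = pl f := rfl

lemma conj_delta (σ : Perm (Fin p)) :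
    embPos σ * deltaPerm p * (embPos σ)⁻¹ * deltaPerm p
      = (Equiv.sumCongr σ σ⁻¹ : Perm (PMSet p)) := by
  ext x
  cases x <;>
    simp [embPos, deltaPerm, Equiv.Perm.mul_apply]

lemma conj_apply_inr (σ : Perm (Fin p)) (k : Fin p) :
    (embPos σ * deltaPerm p * (embPos σ)⁻¹) (Sum.inr k) = Sum.inl (σ k) := by
  simp [embPos, deltaPerm, Equiv.Perm.mul_apply]

lemma conj_apply_inl (σ : Perm (Fin p)) (k : Fin p) :
    (embPos σ * deltaPerm p * (embPos σ)⁻¹) (Sum.inl k) = Sum.inr (σ⁻¹ k) := by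
  simp [embPos, deltaPerm, Equiv.Perm.mul_apply]

lemma delta_inl (k : Fin p) : deltaPerm p (Sum.inl k) = Sum.inr k := rfl
lemma delta_inr (k : Fin p) : deltaPerm p (Sum.inr k) = Sum.inl k := rfl

lemma pl_cross (σ α : Perm (Fin p)) : pl (σ * α⁻¹) = pl (σ⁻¹ * α) := by
  calc pl (σ * α⁻¹) = pl ((σ * α⁻¹)⁻¹) := (pl_inv _).symm
    _ = pl (α * σ⁻¹) := by rw [mul_inv_rev, inv_inv]
    _ = pl (σ⁻¹ * (α * σ⁻¹) * (σ⁻¹)⁻¹) := (pl_conj _ _).symm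
    _ = pl (σ⁻¹ * α) := by
        congr 1
        rw [inv_inv]
        group

lemma lengths_of_form (σ α : Perm (Fin p)) :
    pl ((embPos σ * deltaPerm p * (embPos σ)⁻¹) * deltaPerm p) = 2 * pl σ ∧
    pl (((embPos σ * deltaPerm p * (embPos σ)⁻¹) * deltaPerm p)⁻¹ *
        (embPos α * deltaPerm p * (embPos α)⁻¹ * deltaPerm p)) = 2 * pl (σ⁻¹ * α) := by
  have hx : (embPos σ * deltaPerm p * (embPos σ)⁻¹) * deltaPerm p
      = (Equiv.sumCongr σ σ⁻¹ : Perm (PMSet p)) := conj_delta σ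
  constructor
  · rw [hx, pl_sumCongr, pl_inv, two_mul]
  · rw [hx, conj_delta α, sc_inv, sc_mul, inv_inv, pl_sumCongr, pl_cross σ α, two_mul]

end GeodesicAux
open GeodesicAux in
/-- For `α ∈ S_p` and a pairing `π` of `[±p]`, the element `πδ` lies on the geodesic from
the identity to `αδα⁻¹δ` if and only if `π = σδσ⁻¹` for a (unique) permutation `σ` on the
geodesic from the identity to `α`. -/
theorem pairing_geodesic_iff {p : ℕ} (α : Equiv.Perm (Fin p)) (π : Equiv.Perm (PMSet p))
    (hπinv : Function.Involutive π) (hπ : ∀ x, π x ≠ x) :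
    (permLength (π * deltaPerm p) +
        permLength ((π * deltaPerm p)⁻¹ * (embPos α * deltaPerm p * (embPos α)⁻¹ * deltaPerm p))
      = permLength (embPos α * deltaPerm p * (embPos α)⁻¹ * deltaPerm p)) ↔
    (∃! σ : Equiv.Perm (Fin p),
      (permLength σ + permLength (σ⁻¹ * α) = permLength α) ∧
      π = embPos σ * deltaPerm p * (embPos σ)⁻¹) := by
  classical
  have hY : embPos α * deltaPerm p * (embPos α)⁻¹ * deltaPerm p
      = (Equiv.sumCongr α α⁻¹ : Equiv.Perm (PMSet p)) := conj_delta α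
  have hYlen : pl (embPos α * deltaPerm p * (embPos α)⁻¹ * deltaPerm p) = 2 * pl α := by
    rw [hY, pl_sumCongr, pl_inv, two_mul]
  constructor
  · intro H
    simp only [permLength_eq_pl] at H
    have href := geodesic_refines (x := π * deltaPerm p)
      (y := embPos α * deltaPerm p * (embPos α)⁻¹ * deltaPerm p) H
    rw [hY] at href
    have hR : ∀ k : Fin p, ∃ m, π (Sum.inr k) = Sum.inl m := by
      intro k
      have h1 := href (Sum.inl k)
      have h2 : (π * deltaPerm p) (Sum.inl k) = π (Sum.inr k) := by
        rw [Equiv.Perm.mul_apply, delta_inl]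
      rw [h2] at h1
      exact sameCycle_sumCongr_inl h1
    have hL : ∀ k : Fin p, ∃ m, π (Sum.inl k) = Sum.inr m := by
      intro k
      have h1 := href (Sum.inr k)
      have h2 : (π * deltaPerm p) (Sum.inr k) = π (Sum.inl k) := by
        rw [Equiv.Perm.mul_apply, delta_inr]
      rw [h2] at h1
      exact sameCycle_sumCongr_inr h1
    choose f hf using hR
    choose g hg using hL
    have hgf : ∀ k, g (f k) = k := by
      intro k
      have h1 : π (Sum.inl (f k)) = Sum.inr k := by rw [← hf k, hπinv (Sum.inr k)]
      have h2 := hg (f k)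
      rw [h1] at h2
      exact (Sum.inr_injective h2).symm
    have hfg : ∀ k, f (g k) = k := by
      intro k
      have h1 : π (Sum.inr (g k)) = Sum.inl k := by rw [← hg k, hπinv (Sum.inl k)]
      have h2 := hf (g k)
      rw [h1] at h2
      exact (Sum.inl_injective h2).symm
    set σ : Equiv.Perm (Fin p) := ⟨f, g, hgf, hfg⟩ with hσdef
    have hσapp : ∀ k, σ k = f k := fun k => rfl
    have hσsymm : ∀ k, σ⁻¹ k = g k := fun k => rfl
    have hπeq : π = embPos σ * deltaPerm p * (embPos σ)⁻¹ := by
      ext x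
      cases x with
      | inl k => rw [conj_apply_inl, hσsymm, hg]
      | inr k => rw [conj_apply_inr, hσapp, hf]
    obtain ⟨e1, e2⟩ := lengths_of_form σ α
    rw [← hπeq] at e1 e2
    have hgeo : pl σ + pl (σ⁻¹ * α) = pl α := by
      rw [e1, e2, hYlen] at H
      omega
    refine ⟨σ, ⟨by simpa only [permLength_eq_pl] using hgeo, hπeq⟩, ?_⟩
    rintro σ' ⟨-, hπ'⟩
    refine Equiv.ext fun k => ?_
    have h1 : π (Sum.inr k) = Sum.inl (σ' k) := by rw [hπ', conj_apply_inr]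
    rw [hf k] at h1
    have h2 := Sum.inl_injective h1
    rw [← h2]
    exact (hσapp k).symm
  · rintro ⟨σ, ⟨hgeo, hπeq⟩, -⟩
    simp only [permLength_eq_pl] at hgeo ⊢
    obtain ⟨e1, e2⟩ := lengths_of_form σ α
    rw [← hπeq] at e1 e2
    rw [e1, e2, hYlen]
    omega
end

section
/- If tensor free cumulants factorize as products of componentwise free cumulants, this is preserved by the moment-cumulant relations: suppose x₁,...,x_p are elements of an r-partite tensor probability space and there exist non-commutative probability spaces (A^(s), φ^(s)) and elements y_i^(s) such that φ_{α̲}(x₁,...,x_p) = ∏_{s=1}^r φ^(s)_{α_s}(y₁^(s),...,y_p^(s)) for all tuples α̲ ∈ (S_p)^r. Then the tensor free cumulants also factorize: κ_{α̲}(x₁,...,x_p) = ∏_{s=1}^r κ̃^(s)_{α_s}(y₁^(s),...,y_p^(s)), where κ̃^(s) are the free cumulants associated to φ^(s). -/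
open scoped Classical

/-- The geodesic order: `α ≤ β` iff `|α| + |α⁻¹β| = |β|`. -/
def geoLe {α : Type*} [DecidableEq α] [Fintype α] (σ τ : Equiv.Perm α) : Prop :=
  permLength σ + permLength (σ⁻¹ * τ) = permLength τ

/-- The Möbius function `Möb(σ) = ∏_{c ∈ Cycles(σ)} (−1)^{|c|} Cat_{|c|}`. -/
def moeb {p : ℕ} (σ : Equiv.Perm (Fin p)) : ℂ :=
  ∏ c ∈ σ.cycleFactorsFinset,
    ((-1 : ℂ) ^ (c.support.card - 1) * (catalan (c.support.card - 1) : ℂ))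

/-- Factorization of tensor free cumulants: if the tensor moments of `x₁,…,x_p` factorize as
`φt(α̲) = ∏_s φs_s(α_s)` (where `φs_s(α) = φ^{(s)}_α(y₁^{(s)},…,y_p^{(s)})` are the moment
functionals of elements in non-commutative probability spaces), then the tensor free cumulants
`κ_α̲ = Σ_{β̲ ≤ α̲} φt(β̲) ∏_s Möb(β_s⁻¹α_s)` also factorize as the product of the free
cumulants `κ̃^{(s)}_{α_s} = Σ_{τ ≤ α_s} φs_s(τ) Möb(τ⁻¹α_s)`. -/
theorem tensorCumulants_factorize {p r : ℕ}
    (φt : (Fin r → Equiv.Perm (Fin p)) → ℂ)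
    (φs : Fin r → Equiv.Perm (Fin p) → ℂ)
    (hfact : ∀ a : Fin r → Equiv.Perm (Fin p), φt a = ∏ s, φs s (a s)) :
    ∀ a : Fin r → Equiv.Perm (Fin p),
      (∑ b ∈ Finset.univ.filter
          (fun b : Fin r → Equiv.Perm (Fin p) => ∀ s, geoLe (b s) (a s)),
        φt b * ∏ s, moeb ((b s)⁻¹ * a s))
      = ∏ s, ∑ τ ∈ Finset.univ.filter (fun τ : Equiv.Perm (Fin p) => geoLe τ (a s)),
          φs s τ * moeb (τ⁻¹ * a s) := by
  intro a
  rw [Finset.prod_univ_sum]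
  apply Finset.sum_congr
  · ext b
    simp [Fintype.mem_piFinset]
  · intro b hb
    rw [hfact, ← Finset.prod_mul_distrib]
end

section
/- Tensor freeness of componentwise tensor products of free families: let (A^(s), φ^(s)) for s = 1,...,r be non-commutative probability spaces, and for each s let A₁^(s),...,A_L^(s) ⊆ A^(s) be freely independent unital subalgebras. Form the tensor product tensor probability space A = ⨂_s A^(s) with φ_{α̲}(⨂_s x₁^(s),...,⨂_s x_p^(s)) = ∏_s φ^(s)_{α_s}(x₁^(s),...,x_p^(s)), and set A_i = ⨂_s A_i^(s). Then for every irreducible tuple α̲ ∈ (S_p)^r and every non-constant function f: [p] → [L] with x_j ∈ A_{f(j)}, the mixed tensor free cumulant κ_{α̲}(x₁,...,x_p) vanishes; i.e., the A_i are tensor freely independent. -/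
open scoped Classical

/-- The moment functional `φ_σ(x₁,…,x_p) = ∏_{cycles (i₁ i₂ ⋯ i_n) of σ} φ(x_{i₁}⋯x_{i_n})`,
where each cycle is traversed starting from its smallest element (for a tracial `φ` the
starting point is irrelevant); fixed points contribute factors `φ(x_i)`. -/
noncomputable def permMoment {A : Type*} [Ring A] {p : ℕ}
    (φ : A → ℂ) (σ : Equiv.Perm (Fin p)) (x : Fin p → A) : ℂ :=
  (∏ c ∈ σ.cycleFactorsFinset,
    if h : c.support.Nonempty then
      φ (((List.range c.support.card).map fun j => x ((c ^ j) (c.support.min' h))).prod)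
    else 1)
  * ∏ i ∈ Finset.univ.filter fun i => σ i = i, φ (x i)

/-- The free cumulant `κ̃_σ(x₁,…,x_p) = Σ_{τ ≤ σ} φ_τ(x₁,…,x_p) Möb(τ⁻¹σ)`. -/
noncomputable def freeCum {A : Type*} [Ring A] {p : ℕ}
    (φ : A → ℂ) (σ : Equiv.Perm (Fin p)) (x : Fin p → A) : ℂ :=
  ∑ τ ∈ Finset.univ.filter (fun τ : Equiv.Perm (Fin p) => geoLe τ σ),
    permMoment φ τ x * moeb (τ⁻¹ * σ)

/-- A tuple `α̲ ∈ (S_p)^r` is irreducible when the join of the orbit partitions of its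
components is the one-block partition of `[p]`. -/
def IrreducibleTuple {p r : ℕ} (a : Fin r → Equiv.Perm (Fin p)) : Prop :=
  ∀ i j : Fin p, Relation.EqvGen (fun i j => ∃ s, (a s).SameCycle i j) i j

namespace TF
open Equiv Equiv.Perm

variable {α : Type*} [DecidableEq α] [Fintype α]

lemma permLength_exists (σ : Equiv.Perm α) :
    ∃ l : List (Equiv.Perm α), l.length = permLength σ ∧ (∀ τ ∈ l, τ.IsSwap) ∧ l.prod = σ := by
  have h : {n | ∃ l : List (Equiv.Perm α), l.length = n ∧ (∀ τ ∈ l, τ.IsSwap) ∧ l.prod = σ}.Nonempty := by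
    obtain ⟨l, hl, hsw⟩ := (Equiv.Perm.truncSwapFactors σ).out
    exact ⟨l.length, l, rfl, hsw, hl⟩
  exact Nat.sInf_mem h

lemma permLength_le {σ : Equiv.Perm α} {l : List (Equiv.Perm α)} (hsw : ∀ τ ∈ l, τ.IsSwap)
    (hp : l.prod = σ) : permLength σ ≤ l.length :=
  Nat.sInf_le ⟨l, rfl, hsw, hp⟩

lemma permLength_one : permLength (1 : Equiv.Perm α) = 0 :=
  Nat.le_zero.mp (permLength_le (l := []) (by simp) (by simp))

lemma permLength_mul_le (σ τ : Equiv.Perm α) :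
    permLength (σ * τ) ≤ permLength σ + permLength τ := by
  obtain ⟨l1, h1, hs1, hp1⟩ := permLength_exists σ
  obtain ⟨l2, h2, hs2, hp2⟩ := permLength_exists τ
  have h := permLength_le (σ := σ * τ) (l := l1 ++ l2) ?_ ?_
  · simpa [h1, h2] using h
  · intro x hx; rcases List.mem_append.mp hx with h | h
    exacts [hs1 x h, hs2 x h]
  · simp [List.prod_append, hp1, hp2]

lemma permLength_inv (σ : Equiv.Perm α) : permLength σ⁻¹ = permLength σ := by
  have key : ∀ δ : Equiv.Perm α, permLength δ⁻¹ ≤ permLength δ := by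
    intro δ
    obtain ⟨l, hlen, hsw, hp⟩ := permLength_exists δ
    have h := permLength_le (σ := δ⁻¹) (l := (List.map (fun x => x⁻¹) l).reverse) ?_ ?_
    · simpa [hlen] using h
    · intro τ hτ
      rw [List.mem_reverse, List.mem_map] at hτ
      obtain ⟨x, hx, rfl⟩ := hτ
      obtain ⟨a, b, hab, rfl⟩ := hsw x hx
      exact ⟨a, b, hab, by rw [Equiv.swap_inv]⟩
    · rw [← List.prod_inv_reverse, hp]
  exact le_antisymm (key σ) (by simpa using key σ⁻¹)

/-- The orbit setoid of a permutation. -/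
def scs (σ : Equiv.Perm α) : Setoid α :=
  ⟨σ.SameCycle, ⟨fun x => ⟨0, by simp⟩, fun h => h.symm, fun h h' => h.trans h'⟩⟩

/-- Number of orbits of a permutation. -/
noncomputable def cQ (σ : Equiv.Perm α) : ℕ := Nat.card (Quotient (scs σ))

omit [DecidableEq α] [Fintype α] in
lemma quot_map_surj {s t : Setoid α} (h : ∀ x y, s.r x y → t.r x y) :
    Function.Surjective (Quotient.map' (s₂ := t) id h) := by
  intro q
  induction q using Quotient.inductionOn' with
  | h x => exact ⟨Quotient.mk'' x, rfl⟩

omit [DecidableEq α] [Fintype α] in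
lemma card_quot_le_of_le [Finite α] {s t : Setoid α} (h : ∀ x y, s.r x y → t.r x y) :
    Nat.card (Quotient t) ≤ Nat.card (Quotient s) :=
  Nat.card_le_card_of_surjective _ (quot_map_surj h)

/-- Gluing two points of a setoid. -/
def glueSetoid (s : Setoid α) (a b : α) : Setoid α where
  r x y := s.r x y ∨ (s.r x a ∧ s.r b y) ∨ (s.r x b ∧ s.r a y)
  iseqv := by
    have R := s.iseqv.refl
    have S := fun {x y} => s.iseqv.symm (x := x) (y := y)
    have T := fun {x y z} => s.iseqv.trans (x := x) (y := y) (z := z)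
    constructor
    · intro x; exact Or.inl (R x)
    · rintro x y (h | ⟨h1, h2⟩ | ⟨h1, h2⟩)
      · exact Or.inl (S h)
      · exact Or.inr (Or.inr ⟨S h2, S h1⟩)
      · exact Or.inr (Or.inl ⟨S h2, S h1⟩)
    · rintro x y z (h | ⟨h1, h2⟩ | ⟨h1, h2⟩) (h' | ⟨h1', h2'⟩ | ⟨h1', h2'⟩)
      · exact Or.inl (T h h')
      · exact Or.inr (Or.inl ⟨T h h1', h2'⟩)
      · exact Or.inr (Or.inr ⟨T h h1', h2'⟩)
      · exact Or.inr (Or.inl ⟨h1, T h2 h'⟩)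
      · exact Or.inl (T (T h1 (S (T h2 h1'))) h2')
      · exact Or.inl (T h1 h2')
      · exact Or.inr (Or.inr ⟨h1, T h2 h'⟩)
      · exact Or.inl (T h1 h2')
      · exact Or.inl (T (T h1 (S (T h2 h1'))) h2')

omit [DecidableEq α] in
lemma card_quot_glue [Finite α] (s : Setoid α) (a b : α) :
    Nat.card (Quotient s) ≤ Nat.card (Quotient (glueSetoid s a b)) + 1 := by
  classical
  set t := glueSetoid s a b with ht
  have S := fun {x y} => s.iseqv.symm (x := x) (y := y)
  have T := fun {x y z} => s.iseqv.trans (x := x) (y := y) (z := z)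
  -- the canonical projection
  have hle : ∀ x y, s.r x y → t.r x y := fun x y h => Or.inl h
  let g : Quotient s → Quotient t := Quotient.map' id hle
  let F : Quotient s → Quotient t ⊕ Unit := fun q =>
    if q = Quotient.mk'' b ∧ ¬ s.r a b then Sum.inr () else Sum.inl (g q)
  have hF : Function.Injective F := by
    intro q1 q2 h
    by_cases h1 : q1 = Quotient.mk'' b ∧ ¬ s.r a b <;>
      by_cases h2 : q2 = Quotient.mk'' b ∧ ¬ s.r a b
    · exact h1.1.trans h2.1.symm
    · simp only [F, if_pos h1, if_neg h2] at h
      exact absurd h (by simp)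
    · simp only [F, if_neg h1, if_pos h2] at h
      exact absurd h (by simp)
    · simp only [F, if_neg h1, if_pos h2, if_neg h2] at h
      -- h : g q1 = g q2
      induction q1 using Quotient.inductionOn' with
      | h x =>
      induction q2 using Quotient.inductionOn' with
      | h y =>
      have hg : g (Quotient.mk'' x) = g (Quotient.mk'' y) := Sum.inl_injective h
      simp only [g, Quotient.map'_mk''] at hg
      have hxy : t.r x y := Quotient.exact' hg
      rcases hxy with hr | ⟨hxa, hby⟩ | ⟨hxb, hay⟩
      · exact Quotient.sound' hr
      · -- q2 is the class of b
        have hyb : s.r y b := S hby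
        have : s.r a b := by
          rcases not_and_or.mp h2 with hc | hc
        -- either q2 ≠ ⟦b⟧ (contradiction) or ¬¬ s.r a b
          · exact absurd (Quotient.sound' hyb) hc
          · exact not_not.mp hc
        exact Quotient.sound' (T (T hxa this) hby)
      · have hxbq : Quotient.mk'' (s₁ := s) x = Quotient.mk'' b := Quotient.sound' hxb
        have : s.r a b := by
          rcases not_and_or.mp h1 with hc | hc
          · exact absurd hxbq hc
          · exact not_not.mp hc
        exact Quotient.sound' (T (T hxb (S this)) hay)
  calc Nat.card (Quotient s) ≤ Nat.card (Quotient t ⊕ Unit) :=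
        Nat.card_le_card_of_injective F hF
    _ = Nat.card (Quotient t) + 1 := by
        rw [Nat.card_sum]; simp

/-- Lower bound machine: a setoid relating the pairs of a list of swaps,
whose quotient is not too small. -/
lemma exists_setoid_of_swaps (l : List (Equiv.Perm α)) (hsw : ∀ τ ∈ l, τ.IsSwap) :
    ∃ s : Setoid α, (∀ τ ∈ l, ∀ x, s.r x (τ x)) ∧
      Fintype.card α ≤ Nat.card (Quotient s) + l.length := by
  classical
  induction l with
  | nil =>
    refine ⟨⟨Eq, eq_equivalence⟩, by simp, ?_⟩
    simp only [List.length_nil, add_zero]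
    have e : α ≃ Quotient (⟨Eq, eq_equivalence⟩ : Setoid α) :=
      ⟨fun x => Quotient.mk'' x, Quotient.lift id (fun a b h => h), fun x => rfl,
        fun q => by induction q using Quotient.inductionOn' with | h x => rfl⟩
    rw [← Nat.card_congr e, Nat.card_eq_fintype_card]
  | cons τ l ih =>
    obtain ⟨s, hrel, hcard⟩ := ih (fun τ' hτ' => hsw τ' (List.mem_cons_of_mem _ hτ'))
    obtain ⟨a, b, hab, rfl⟩ := hsw τ (List.mem_cons_self)
    refine ⟨glueSetoid s a b, ?_, ?_⟩
    · intro τ' hτ' x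
      rcases List.mem_cons.mp hτ' with rfl | hτ'
      · rcases eq_or_ne x a with rfl | hxa
        · rw [Equiv.swap_apply_left]
          exact Or.inr (Or.inl ⟨s.iseqv.refl x, s.iseqv.refl b⟩)
        · rcases eq_or_ne x b with rfl | hxb
          · rw [Equiv.swap_apply_right]
            exact Or.inr (Or.inr ⟨s.iseqv.refl x, s.iseqv.refl a⟩)
          · rw [Equiv.swap_apply_of_ne_of_ne hxa hxb]
      · exact Or.inl (hrel τ' hτ' x)
    · have := card_quot_glue s a b
      simp only [List.length_cons]
      omega

omit [DecidableEq α] [Fintype α] in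
lemma setoid_rel_prod (s : Setoid α) (l : List (Equiv.Perm α))
    (h : ∀ τ ∈ l, ∀ x, s.r x (τ x)) : ∀ x, s.r x (l.prod x) := by
  induction l with
  | nil => intro x; simpa using s.iseqv.refl x
  | cons τ l ih =>
    intro x
    have h1 := ih (fun τ' hτ' => h τ' (List.mem_cons_of_mem _ hτ')) x
    have h2 := h τ (List.mem_cons_self) (l.prod x)
    rw [List.prod_cons]
    exact s.iseqv.trans h1 h2

omit [DecidableEq α] [Fintype α] in
lemma setoid_rel_pow (s : Setoid α) (σ : Equiv.Perm α) (h : ∀ y, s.r y (σ y)) :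
    ∀ (n : ℕ) (x : α), s.r x ((σ ^ n) x) := by
  intro n
  induction n with
  | zero => intro x; simpa using s.iseqv.refl x
  | succ n ih =>
    intro x
    have h2 := h ((σ ^ n) x)
    have hp : (σ ^ (n + 1)) x = σ ((σ ^ n) x) := by
      rw [pow_succ', Equiv.Perm.mul_apply]
    rw [hp]
    exact s.iseqv.trans (ih x) h2

lemma scs_le_of_rel (s : Setoid α) (σ : Equiv.Perm α) (h : ∀ y, s.r y (σ y)) :
    ∀ x y, σ.SameCycle x y → s.r x y := by
  intro x y hxy
  obtain ⟨i, _, _, hi⟩ := hxy.exists_pow_eq σ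
  rw [← hi]
  exact setoid_rel_pow s σ h i x

lemma scs_rel {σ : Equiv.Perm α} {x y : α} : (scs σ).r x y ↔ σ.SameCycle x y := Iff.rfl

lemma cQ_one : cQ (1 : Equiv.Perm α) = Fintype.card α := by
  have e : α ≃ Quotient (scs (1 : Equiv.Perm α)) :=
    ⟨fun x => Quotient.mk'' x,
     Quotient.lift id (fun a b h => Equiv.Perm.sameCycle_one.mp h),
     fun x => rfl,
     fun q => by induction q using Quotient.inductionOn' with | h x => rfl⟩
  rw [cQ, ← Nat.card_congr e, Nat.card_eq_fintype_card]

lemma cQ_le_card (σ : Equiv.Perm α) : cQ σ ≤ Fintype.card α := by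
  rw [cQ, ← Nat.card_eq_fintype_card]
  exact Nat.card_le_card_of_surjective (Quotient.mk'' (s₁ := scs σ)) (fun q => by
    induction q using Quotient.inductionOn' with | h x => exact ⟨x, rfl⟩)

lemma nat_card_lt_of_surj_not_inj {A B : Type*} [Finite A] (f : A → B)
    (hs : Function.Surjective f) (hni : ¬ Function.Injective f) : Nat.card B < Nat.card A := by
  have : Finite B := Finite.of_surjective f hs
  cases nonempty_fintype A
  cases nonempty_fintype B
  simp only [Nat.card_eq_fintype_card]
  exact Fintype.card_lt_of_surjective_not_injective f hs hni

lemma cQ_swap_mul {σ : Equiv.Perm α} {x : α} (hx : σ x ≠ x) :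
    cQ σ < cQ (Equiv.swap x (σ x) * σ) := by
  classical
  set σ' := Equiv.swap x (σ x) * σ with hσ'
  have hle : ∀ a b, (scs σ').r a b → (scs σ).r a b := by
    have hstep : ∀ y, σ.SameCycle y (σ' y) := by
      intro y
      rcases eq_or_ne (σ y) x with h1 | h1
      · have : σ' y = σ x := by simp [hσ', Equiv.Perm.mul_apply, h1]
        rw [this]
        exact ⟨2, by simp [zpow_two, pow_two, Equiv.Perm.mul_apply, h1]⟩
      · rcases eq_or_ne (σ y) (σ x) with h2 | h2
        · have hyx : y = x := σ.injective h2
          have : σ' y = y := by simp [hσ', Equiv.Perm.mul_apply, h2, hyx]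
          rw [this]
        · have : σ' y = σ y := by
            simp [hσ', Equiv.Perm.mul_apply, Equiv.swap_apply_of_ne_of_ne h1 h2]
          rw [this]
          exact ⟨1, by simp⟩
    exact fun a b h => scs_le_of_rel (scs σ) σ' hstep a b h
  have hfix : σ' x = x := by simp [hσ', Equiv.Perm.mul_apply]
  have hnotsc : ¬ (σ'.SameCycle x (σ x)) := by
    rintro ⟨i, hi⟩
    rw [Equiv.Perm.zpow_apply_eq_self_of_apply_eq_self hfix i] at hi
    exact hx hi.symm
  have hni : ¬ Function.Injective (Quotient.map' (s₁ := scs σ') (s₂ := scs σ) id hle) := by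
    intro hinj
    have : (Quotient.mk'' (s₁ := scs σ') x) = Quotient.mk'' (σ x) := by
      apply hinj
      have : (scs σ).r x (σ x) := ⟨1, by simp⟩
      simpa using Quotient.sound' this
    exact hnotsc (Quotient.exact' this)
  exact nat_card_lt_of_surj_not_inj _ (quot_map_surj hle) hni

lemma permLength_swap_le {a b : α} (hab : a ≠ b) : permLength (Equiv.swap a b) ≤ 1 := by
  have := permLength_le (σ := Equiv.swap a b) (l := [Equiv.swap a b])
    (by simp; exact ⟨a, b, hab, rfl⟩) (by simp)
  simpa using this

lemma permLength_add_cQ (σ : Equiv.Perm α) : permLength σ + cQ σ = Fintype.card α := by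
  classical
  have lower : Fintype.card α ≤ permLength σ + cQ σ := by
    obtain ⟨l, hlen, hsw, hp⟩ := permLength_exists σ
    obtain ⟨s, hrel, hcard⟩ := exists_setoid_of_swaps l hsw
    have hσrel : ∀ y, s.r y (σ y) := by
      intro y
      have := setoid_rel_prod s l hrel y
      rwa [hp] at this
    have h1 : Nat.card (Quotient s) ≤ cQ σ :=
      card_quot_le_of_le (fun a b h => scs_le_of_rel s σ hσrel a b h)
    omega
  have upper : ∀ n (σ : Equiv.Perm α), σ.support.card ≤ n →
      permLength σ + cQ σ ≤ Fintype.card α := by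
    intro n
    induction n with
    | zero =>
      intro σ hσ
      have h1 : σ = 1 := by
        rw [← Equiv.Perm.support_eq_empty_iff, ← Finset.card_eq_zero]; omega
      rw [h1, permLength_one, cQ_one]; omega
    | succ n ih =>
      intro σ hσ
      rcases eq_or_ne σ 1 with rfl | hne
      · rw [permLength_one, cQ_one]; omega
      · obtain ⟨x, hx⟩ : ∃ x, σ x ≠ x := by
          by_contra h
          push_neg at h
          exact hne (Equiv.ext h)
        set σ' := Equiv.swap x (σ x) * σ with hσ'
        have hcard : σ'.support.card < σ.support.card :=
          Equiv.Perm.card_support_swap_mul hx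
        have hsupp : σ.support.card ≤ n + 1 := hσ
        have ih' := ih σ' (by omega)
        have hQ : cQ σ < cQ σ' := cQ_swap_mul hx
        have hlen : permLength σ ≤ permLength σ' + 1 := by
          have hdecomp : σ = Equiv.swap x (σ x) * σ' := by
            rw [hσ', ← mul_assoc, Equiv.swap_mul_self, one_mul]
          have hmul := permLength_mul_le (Equiv.swap x (σ x)) σ'
          rw [← hdecomp] at hmul
          have := permLength_swap_le (a := x) (b := σ x) (Ne.symm hx)
          omega
        omega
  exact le_antisymm (upper σ.support.card σ le_rfl) lower

lemma cQ_eq (σ : Equiv.Perm α) :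
    cQ σ = (Fintype.card α - σ.support.card) + σ.cycleFactorsFinset.card := by
  classical
  have key : ∀ x : α, ¬ σ x = x → σ.cycleOf x ∈ σ.cycleFactorsFinset := fun x h =>
    Equiv.Perm.cycleOf_mem_cycleFactorsFinset_iff.mpr (Equiv.Perm.mem_support.mpr h)
  let g : α → ({x // σ x = x} ⊕ σ.cycleFactorsFinset) := fun x =>
    if h : σ x = x then Sum.inl ⟨x, h⟩ else Sum.inr ⟨σ.cycleOf x, key x h⟩
  have wd : ∀ x y, (scs σ).r x y → g x = g y := by
    intro x y hxy
    rcases hxy with ⟨i, hi⟩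
    by_cases hx : σ x = x
    · have : y = x := by
        rw [← hi, Equiv.Perm.zpow_apply_eq_self_of_apply_eq_self hx]
      subst this
      rfl
    · have hy : ¬ σ y = y := by
        intro hy
        have : x = y := by
          have : (σ ^ (-i)) y = x := by rw [← hi]; simp
          rw [← this, Equiv.Perm.zpow_apply_eq_self_of_apply_eq_self hy]
        exact hx (this ▸ hy)
      have hceq : σ.cycleOf x = σ.cycleOf y :=
        Equiv.Perm.SameCycle.cycleOf_eq ⟨i, hi⟩
      simp only [g, dif_neg hx, dif_neg hy]
      exact congrArg _ (Subtype.ext hceq)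
  let F : Quotient (scs σ) → ({x // σ x = x} ⊕ σ.cycleFactorsFinset) := Quotient.lift g wd
  have hinj : Function.Injective F := by
    intro q1 q2 h
    induction q1 using Quotient.inductionOn' with
    | h x =>
    induction q2 using Quotient.inductionOn' with
    | h y =>
    simp only [F, Quotient.lift_mk] at h
    by_cases hx : σ x = x <;> by_cases hy : σ y = y
    · simp only [g, dif_pos hx, dif_pos hy, Sum.inl.injEq, Subtype.mk.injEq] at h
      exact Quotient.sound' (h ▸ (scs σ).iseqv.refl x)
    · simp only [g, dif_pos hx, dif_neg hy] at h
      exact absurd h (by simp)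
    · simp only [g, dif_neg hx, dif_pos hy] at h
      exact absurd h (by simp)
    · simp only [g, dif_neg hx, dif_neg hy, Sum.inr.injEq, Subtype.mk.injEq] at h
      have hysup : y ∈ (σ.cycleOf x).support := by
        rw [h, Equiv.Perm.mem_support_cycleOf_iff]
        exact ⟨Equiv.Perm.SameCycle.refl σ y, Equiv.Perm.mem_support.mpr hy⟩
      rw [Equiv.Perm.mem_support_cycleOf_iff] at hysup
      exact Quotient.sound' hysup.1
  have hsurj : Function.Surjective F := by
    rintro (⟨x, hx⟩ | ⟨c, hc⟩)
    · exact ⟨Quotient.mk'' x, by simp only [F, Quotient.lift_mk, g, dif_pos hx]⟩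
    · have hcyc : c.IsCycle := (Equiv.Perm.mem_cycleFactorsFinset_iff.mp hc).1
      obtain ⟨z, hz⟩ := hcyc.nonempty_support
      have hzσ : σ z ≠ z := by
        have := Equiv.Perm.mem_cycleFactorsFinset_support_le hc hz
        exact Equiv.Perm.mem_support.mp this
      have hcz : σ.cycleOf z = c := (Equiv.Perm.cycle_is_cycleOf hz hc).symm
      exact ⟨Quotient.mk'' z, by
        simp only [F, Quotient.lift_mk, g, dif_neg hzσ]
        exact congrArg _ (Subtype.ext hcz)⟩
  have hcards : cQ σ = Fintype.card ({x // σ x = x} ⊕ σ.cycleFactorsFinset) := by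
    rw [cQ, Nat.card_congr (Equiv.ofBijective F ⟨hinj, hsurj⟩), Nat.card_eq_fintype_card]
  rw [hcards, Fintype.card_sum, Fintype.card_coe]
  congr 1
  rw [Fintype.card_subtype]
  have : Finset.filter (fun x => σ x = x) Finset.univ = σ.supportᶜ := by
    ext z
    simp [Equiv.Perm.mem_support]
  rw [this, Finset.card_compl]

lemma cycleFactors_card_le (σ : Equiv.Perm α) :
    σ.cycleFactorsFinset.card ≤ σ.support.card := by
  have h1 := cQ_le_card σ
  have h2 := cQ_eq σ
  have h3 : σ.support.card ≤ Fintype.card α := Finset.card_le_univ _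
  omega

lemma permLength_eq (σ : Equiv.Perm α) :
    permLength σ = σ.support.card - σ.cycleFactorsFinset.card := by
  have h1 := permLength_add_cQ σ
  have h2 := cQ_eq σ
  have h3 : σ.support.card ≤ Fintype.card α := Finset.card_le_univ _
  have h4 := cycleFactors_card_le σ
  omega

lemma permLength_mul_disjoint {σ τ : Equiv.Perm α} (h : σ.Disjoint τ) :
    permLength (σ * τ) = permLength σ + permLength τ := by
  rw [permLength_eq, permLength_eq, permLength_eq,
    h.card_support_mul, h.cycleFactorsFinset_mul_eq_union,
    Finset.card_union_of_disjoint h.disjoint_cycleFactorsFinset]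
  have := cycleFactors_card_le σ
  have := cycleFactors_card_le τ
  omega

/-- Key lemma: going down in the geodesic order refines orbits. -/
lemma sameCycle_of_geoLe {σ τ : Equiv.Perm α} (h : geoLe τ σ) :
    ∀ x y, τ.SameCycle x y → σ.SameCycle x y := by
  classical
  obtain ⟨l₁, hl₁, hs₁, hp₁⟩ := permLength_exists τ
  obtain ⟨l₂, hl₂, hs₂, hp₂⟩ := permLength_exists (τ⁻¹ * σ)
  obtain ⟨s, hrel, hcard⟩ := exists_setoid_of_swaps (l₁ ++ l₂) (by
    intro x hx; rcases List.mem_append.mp hx with h' | h'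
    exacts [hs₁ x h', hs₂ x h'])
  have hprod : (l₁ ++ l₂).prod = σ := by
    rw [List.prod_append, hp₁, hp₂, mul_inv_cancel_left]
  have hσrel : ∀ y, s.r y (σ y) := by
    intro y
    have := setoid_rel_prod s (l₁ ++ l₂) hrel y
    rwa [hprod] at this
  have hscsσ : ∀ x y, σ.SameCycle x y → s.r x y := scs_le_of_rel s σ hσrel
  have h1 : Nat.card (Quotient s) ≤ cQ σ := card_quot_le_of_le hscsσ
  have h2 : Fintype.card α ≤ Nat.card (Quotient s) + (permLength τ + permLength (τ⁻¹ * σ)) := by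
    have := hcard
    rw [List.length_append, hl₁, hl₂] at this
    omega
  have h3 := permLength_add_cQ σ
  have hgeo : permLength τ + permLength (τ⁻¹ * σ) = permLength σ := h
  have hcards : Nat.card (Quotient s) = cQ σ := by omega
  -- the natural map Quotient (scs σ) → Quotient s is a surjection between
  -- equinumerous finite types, hence injective
  have hFin : Finite (Quotient (scs σ)) := Quotient.finite _
  have hFin2 : Finite (Quotient s) := Quotient.finite _
  have hbij : Function.Bijective (Quotient.map' (s₁ := scs σ) (s₂ := s) id hscsσ) := by
    rw [Nat.bijective_iff_surjective_and_card]
    refine ⟨quot_map_surj hscsσ, ?_⟩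
    rw [cQ] at hcards
    omega
  -- τ's orbits are contained in s's classes
  have hτrel : ∀ y, s.r y (τ y) := by
    intro y
    have := setoid_rel_prod s l₁ (fun τ' hτ' x => hrel τ' (List.mem_append_left _ hτ') x) y
    rwa [hp₁] at this
  intro x y hxy
  have hs : s.r x y := scs_le_of_rel s τ hτrel x y hxy
  have : (Quotient.mk'' (s₁ := scs σ) x) = Quotient.mk'' y := by
    apply hbij.1
    exact (Quotient.sound' hs : (Quotient.mk'' x : Quotient s) = Quotient.mk'' y)
  exact Quotient.exact' this

section Moments
open Equiv Equiv.Perm Finset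

variable {A : Type*} [Ring A] {p : ℕ}

/-- The moment of one cycle, traversed starting at `z`. -/
noncomputable def mstart (φ : A → ℂ) (x : Fin p → A) (c : Equiv.Perm (Fin p)) (z : Fin p) : ℂ :=
  φ (((List.range c.support.card).map fun j => x ((c ^ j) z)).prod)

/-- The moment of one cycle. -/
noncomputable def momterm (φ : A → ℂ) (x : Fin p → A) (c : Equiv.Perm (Fin p)) : ℂ :=
  if h : c.support.Nonempty then mstart φ x c (c.support.min' h) else 1

/-- The moment functional relative to a region `D` (fixed points outside `D` are dropped). -/
noncomputable def relM (φ : A → ℂ) (σ : Equiv.Perm (Fin p)) (x : Fin p → A)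
    (D : Finset (Fin p)) : ℂ :=
  (∏ c ∈ σ.cycleFactorsFinset, momterm φ x c) *
    ∏ i ∈ D.filter (fun i => σ i = i), φ (x i)

lemma permMoment_eq_relM (φ : A → ℂ) (σ : Equiv.Perm (Fin p)) (x : Fin p → A) :
    permMoment φ σ x = relM φ σ x Finset.univ := rfl

/-- Rotation invariance of the cycle moment, for a tracial functional. -/
lemma mstart_eq_of_mem_support (φ : A → ℂ) (htr : ∀ a b : A, φ (a * b) = φ (b * a))
    (x : Fin p → A) {c : Equiv.Perm (Fin p)} (hc : c.IsCycle) {z w : Fin p}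
    (hz : z ∈ c.support) (hw : w ∈ c.support) :
    mstart φ x c z = mstart φ x c w := by
  classical
  set n := c.support.card with hn
  have hord : orderOf c = n := hc.orderOf
  have hn2 : 2 ≤ n := hc.two_le_card_support
  have hsc : c.SameCycle z w := hc.sameCycle (mem_support.mp hz) (mem_support.mp hw)
  obtain ⟨i, _, _, hi⟩ := hsc.exists_pow_eq c
  set m := i % n with hm
  have hmn : m < n := Nat.mod_lt _ (by omega)
  have hcm : (c ^ m) z = w := by
    rw [hm, ← hord, pow_mod_orderOf, hi]
  set L := (List.range n).map (fun j => x ((c ^ j) z)) with hL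
  have hlen : L.length = n := by simp [hL]
  have hrot : L.rotate m = (List.range n).map (fun j => x ((c ^ j) w)) := by
    apply List.ext_getElem
    · simp [hL]
    · intro i h1 h2
      have hiL : i < n := by simpa [hL] using h2
      rw [List.getElem_rotate]
      simp only [hL, List.getElem_map, List.getElem_range, hlen]
      congr 1
      rw [← hcm, ← Equiv.Perm.mul_apply, ← pow_add]
      conv_rhs => rw [← pow_mod_orderOf, hord]
      rw [List.length_map, List.length_range]
  have h1 : mstart φ x c w = φ ((L.rotate m).prod) := by rw [hrot]; rfl
  rw [h1, List.rotate_eq_drop_append_take (by omega), List.prod_append, htr,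
    ← List.prod_append, List.take_append_drop]
  rfl

lemma support_subsets_disjoint {τ₁ τ₂ : Equiv.Perm (Fin p)} {B : Finset (Fin p)}
    (h1 : τ₁.support ⊆ B) (h2 : τ₂.support ⊆ Bᶜ) : τ₁.Disjoint τ₂ := by
  rw [Equiv.Perm.disjoint_iff_disjoint_support]
  exact Finset.disjoint_of_subset_left h1 (Finset.disjoint_of_subset_right h2 disjoint_compl_right)

lemma apply_mem_of_support_subset {τ : Equiv.Perm (Fin p)} {B : Finset (Fin p)}
    (h : τ.support ⊆ B) {z : Fin p} (hz : z ∉ B) : τ z = z := by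
  by_contra hne
  exact hz (h (Equiv.Perm.mem_support.mpr hne))

lemma relM_mul_split (φ : A → ℂ) (x : Fin p → A) {τ₁ τ₂ : Equiv.Perm (Fin p)}
    {B : Finset (Fin p)} (h1 : τ₁.support ⊆ B) (h2 : τ₂.support ⊆ Bᶜ) :
    relM φ (τ₁ * τ₂) x Finset.univ = relM φ τ₁ x B * relM φ τ₂ x Bᶜ := by
  classical
  have hdisj : τ₁.Disjoint τ₂ := support_subsets_disjoint h1 h2
  have hcyc : ∏ c ∈ (τ₁ * τ₂).cycleFactorsFinset, momterm φ x c =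
      (∏ c ∈ τ₁.cycleFactorsFinset, momterm φ x c) *
      (∏ c ∈ τ₂.cycleFactorsFinset, momterm φ x c) := by
    rw [hdisj.cycleFactorsFinset_mul_eq_union,
      Finset.prod_union hdisj.disjoint_cycleFactorsFinset]
  have hfilter : Finset.univ.filter (fun i => (τ₁ * τ₂) i = i) =
      (B.filter (fun i => τ₁ i = i)) ∪ (Bᶜ.filter (fun i => τ₂ i = i)) := by
    ext z
    simp only [Finset.mem_filter, Finset.mem_union, Finset.mem_univ, true_and,
      Finset.mem_compl]
    by_cases hz : z ∈ B
    · have hz2 : τ₂ z = z := apply_mem_of_support_subset h2 (by simpa using hz)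
      rw [Equiv.Perm.mul_apply, hz2]
      constructor
      · intro h; exact Or.inl ⟨hz, h⟩
      · rintro (⟨_, h⟩ | ⟨h, _⟩)
        · exact h
        · exact absurd hz h
    · have hz2 : τ₂ z ∉ B := by
        rcases eq_or_ne (τ₂ z) z with he | hne
        · rwa [he]
        · intro hmem
          exact absurd (h2 (Equiv.Perm.apply_mem_support.mpr (Equiv.Perm.mem_support.mpr hne)))
            (by simpa using hmem)
      have hz1 : τ₁ (τ₂ z) = τ₂ z := apply_mem_of_support_subset h1 hz2
      rw [Equiv.Perm.mul_apply, hz1]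
      constructor
      · intro h; exact Or.inr ⟨hz, h⟩
      · rintro (⟨h, _⟩ | ⟨_, h⟩)
        · exact absurd h hz
        · exact h
  have hdisj2 : Disjoint (B.filter (fun i => τ₁ i = i)) (Bᶜ.filter (fun i => τ₂ i = i)) :=
    Finset.disjoint_of_subset_left (Finset.filter_subset _ _)
      (Finset.disjoint_of_subset_right (Finset.filter_subset _ _) disjoint_compl_right)
  rw [relM, relM, relM, hcyc, hfilter, Finset.prod_union hdisj2]
  ring

lemma moeb_mul_disjoint {σ τ : Equiv.Perm (Fin p)} (h : σ.Disjoint τ) :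
    moeb (σ * τ) = moeb σ * moeb τ := by
  rw [moeb, moeb, moeb, h.cycleFactorsFinset_mul_eq_union,
    Finset.prod_union h.disjoint_cycleFactorsFinset]

lemma moeb_cycleType (σ : Equiv.Perm (Fin p)) :
    moeb σ = (σ.cycleType.map fun m => ((-1 : ℂ) ^ (m - 1) * (catalan (m - 1) : ℂ))).prod := by
  rw [moeb, Finset.prod_eq_multiset_prod, Equiv.Perm.cycleType_def, Multiset.map_map]
  rfl

lemma permLength_eq_cycleType (σ : Equiv.Perm (Fin p)) :
    permLength σ = σ.cycleType.sum - σ.cycleType.card := by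
  rw [permLength_eq, Equiv.Perm.sum_cycleType, Equiv.Perm.cycleType_def, Multiset.card_map]
  rfl

end Moments

section Transport
open Equiv Equiv.Perm Finset

variable {A : Type*} [Ring A] {p n : ℕ} {Bs : Finset (Fin p)}
  (e : Fin n ≃ {z : Fin p // z ∈ Bs})

/-- Transport of a permutation of `Fin n` to a permutation of `Fin p` supported in `Bs`. -/
def T (δ : Equiv.Perm (Fin n)) : Equiv.Perm (Fin p) :=
  δ.extendDomain e

lemma T_apply_img (δ : Equiv.Perm (Fin n)) (j : Fin n) :
    T e δ ((e j : Fin p)) = (e (δ j) : Fin p) :=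
  Equiv.Perm.extendDomain_apply_image δ e j

lemma T_apply_not (δ : Equiv.Perm (Fin n)) {z : Fin p} (hz : z ∉ Bs) :
    T e δ z = z :=
  Equiv.Perm.extendDomain_apply_not_subtype δ e hz

lemma T_inj : Function.Injective (T e) := by
  intro a b h
  have : Equiv.Perm.extendDomainHom e a = Equiv.Perm.extendDomainHom e b := h
  exact Equiv.Perm.extendDomainHom_injective e this

/-- The embedding `Fin n ↪ Fin p` underlying `e`. -/
def emb : Fin n ↪ Fin p :=
  ⟨fun j => (e j : Fin p), fun a b h => e.injective (Subtype.ext h)⟩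

lemma T_support (δ : Equiv.Perm (Fin n)) :
    (T e δ).support = δ.support.map (emb e) := by
  ext w
  simp only [Equiv.Perm.mem_support, Finset.mem_map]
  by_cases hw : w ∈ Bs
  · obtain ⟨j, hj⟩ : ∃ j, (e j : Fin p) = w := ⟨e.symm ⟨w, hw⟩, by simp⟩
    subst hj
    constructor
    · intro h
      exact ⟨j, fun hj => h (by rw [T_apply_img, hj]), rfl⟩
    · rintro ⟨j', hj', hj'e⟩
      have : j' = j := (emb e).injective hj'e
      subst this
      rw [T_apply_img]
      intro h
      exact hj' (e.injective (Subtype.ext h))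
  · rw [T_apply_not e δ hw]
    simp only [ne_eq, not_true_eq_false, false_iff, not_exists, not_and]
    intro j _ hj
    exact hw (hj ▸ (e j).2)

lemma T_len (δ : Equiv.Perm (Fin n)) : permLength (T e δ) = permLength δ := by
  rw [permLength_eq_cycleType, permLength_eq_cycleType, T,
    Equiv.Perm.cycleType_extendDomain]

lemma T_moeb (δ : Equiv.Perm (Fin n)) : moeb (T e δ) = moeb δ := by
  rw [moeb_cycleType, moeb_cycleType, T, Equiv.Perm.cycleType_extendDomain]

lemma T_mul (δ δ' : Equiv.Perm (Fin n)) : T e (δ * δ') = T e δ * T e δ' :=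
  (Equiv.Perm.extendDomain_mul e δ δ').symm

lemma T_inv (δ : Equiv.Perm (Fin n)) : T e δ⁻¹ = (T e δ)⁻¹ :=
  (Equiv.Perm.extendDomain_inv δ e).symm

lemma T_cycleOf {δ : Equiv.Perm (Fin n)} {z : Fin n} :
    (T e δ).cycleOf ((e z : Fin p)) = T e (δ.cycleOf z) := by
  classical
  apply Equiv.ext
  intro w
  by_cases hw : w ∈ Bs
  · obtain ⟨u, rfl⟩ : ∃ u, (e u : Fin p) = w := ⟨e.symm ⟨w, hw⟩, by simp⟩
    have hR : (T e (δ.cycleOf z)) ((e u : Fin p)) = (e ((δ.cycleOf z) u) : Fin p) :=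
      T_apply_img e _ u
    rw [hR]
    simp only [Equiv.Perm.cycleOf_apply]
    split_ifs with h1 h2 h2
    · exact T_apply_img e δ u
    · exact absurd (Equiv.Perm.sameCycle_extendDomain.mp h1) h2
    · exact absurd (Equiv.Perm.sameCycle_extendDomain.mpr h2) h1
    · rfl
  · rw [Equiv.Perm.cycleOf_apply, T_apply_not e _ hw, T_apply_not e _ hw, ite_self]

lemma T_factors (δ : Equiv.Perm (Fin n)) :
    (T e δ).cycleFactorsFinset = δ.cycleFactorsFinset.image (T e) := by
  classical
  ext c'
  constructor
  · intro hc'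
    have hcyc : c'.IsCycle := (Equiv.Perm.mem_cycleFactorsFinset_iff.mp hc').1
    obtain ⟨z', hz'⟩ := hcyc.nonempty_support
    have hc'eq : c' = (T e δ).cycleOf z' := Equiv.Perm.cycle_is_cycleOf hz' hc'
    have hz'supp : z' ∈ (T e δ).support := Equiv.Perm.mem_cycleFactorsFinset_support_le hc' hz'
    rw [T_support] at hz'supp
    obtain ⟨z, hz, rfl⟩ := Finset.mem_map.mp hz'supp
    rw [Finset.mem_image]
    exact ⟨δ.cycleOf z, Equiv.Perm.cycleOf_mem_cycleFactorsFinset_iff.mpr hz,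
      by rw [← T_cycleOf]; exact hc'eq.symm⟩
  · intro hc'
    obtain ⟨d, hd, rfl⟩ := Finset.mem_image.mp hc'
    have hcyc : d.IsCycle := (Equiv.Perm.mem_cycleFactorsFinset_iff.mp hd).1
    obtain ⟨z, hz⟩ := hcyc.nonempty_support
    have hdz : d = δ.cycleOf z :=
      Equiv.Perm.cycle_is_cycleOf hz hd
    have hzsupp : z ∈ δ.support := Equiv.Perm.mem_cycleFactorsFinset_support_le hd hz
    rw [hdz, ← T_cycleOf]
    rw [Equiv.Perm.cycleOf_mem_cycleFactorsFinset_iff, T_support, Finset.mem_map]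
    exact ⟨z, hzsupp, rfl⟩

lemma T_momterm (φ : A → ℂ) (htr : ∀ a b : A, φ (a * b) = φ (b * a))
    (x : Fin p → A) (y : Fin n → A) (hxy : ∀ j, y j = x ((e j : Fin p)))
    {δ : Equiv.Perm (Fin n)} {d : Equiv.Perm (Fin n)} (hd : d ∈ δ.cycleFactorsFinset) :
    momterm φ x (T e d) = momterm φ y d := by
  classical
  have hcyc : d.IsCycle := (Equiv.Perm.mem_cycleFactorsFinset_iff.mp hd).1
  have hsupp : (T e d).support = d.support.map (emb e) := T_support e d
  have hne : d.support.Nonempty := hcyc.nonempty_support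
  have hne' : (T e d).support.Nonempty := by
    rw [hsupp]; exact hne.map
  have hcard : (T e d).support.card = d.support.card := by rw [hsupp, Finset.card_map]
  rw [momterm, momterm, dif_pos hne', dif_pos hne]
  -- the min' of the transported support is the image of some point of d.support
  set w₀ := (T e d).support.min' hne' with hw₀
  have hmin : w₀ ∈ (T e d).support := Finset.min'_mem _ _
  rw [hsupp, Finset.mem_map] at hmin
  obtain ⟨z₀, hz₀, hz₀e⟩ := hmin
  have h1 : mstart φ x (T e d) w₀ = mstart φ y d z₀ := by
    rw [← hz₀e]
    unfold mstart
    rw [hcard]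
    congr 1
    apply congrArg
    apply List.map_congr_left
    intro j _
    have hpow : (T e d) ^ j = T e (d ^ j) := by
      rw [T, T, Equiv.Perm.extendDomain_pow]
    rw [hpow]
    show x ((T e (d ^ j)) ((emb e) z₀)) = y ((d ^ j) z₀)
    rw [hxy]
    apply congrArg
    exact T_apply_img e (d ^ j) z₀
  rw [h1]
  exact mstart_eq_of_mem_support φ htr y hcyc hz₀ (Finset.min'_mem _ _)

lemma T_fix_iff (ρ : Equiv.Perm (Fin n)) {i : Fin p} (hi : i ∈ Bs) :
    T e ρ i = i ↔ ρ (e.symm ⟨i, hi⟩) = e.symm ⟨i, hi⟩ := by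
  set j := e.symm ⟨i, hi⟩ with hj
  have hei : (e j : Fin p) = i := by rw [hj]; simp
  constructor
  · intro h
    apply e.injective
    apply Subtype.ext
    show (e (ρ j) : Fin p) = (e j : Fin p)
    rw [hei, ← T_apply_img e ρ j, hei, h]
  · intro h
    rw [← hei, T_apply_img, h]

lemma T_relM (φ : A → ℂ) (htr : ∀ a b : A, φ (a * b) = φ (b * a))
    (x : Fin p → A) (y : Fin n → A) (hxy : ∀ j, y j = x ((e j : Fin p)))
    (ρ : Equiv.Perm (Fin n)) :
    relM φ (T e ρ) x Bs = permMoment φ ρ y := by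
  classical
  rw [permMoment_eq_relM, relM, relM]
  congr 1
  · rw [T_factors, Finset.prod_image (fun a _ b _ h => T_inj e h)]
    exact Finset.prod_congr rfl (fun d hd => T_momterm e φ htr x y hxy hd)
  · refine Finset.prod_bij' (fun i hi => e.symm ⟨i, (Finset.mem_filter.mp hi).1⟩)
      (fun j _ => (e j : Fin p)) ?_ ?_ ?_ ?_ ?_
    · intro i hi
      obtain ⟨hiB, hfix⟩ := Finset.mem_filter.mp hi
      exact Finset.mem_filter.mpr ⟨Finset.mem_univ _, (T_fix_iff e ρ hiB).mp hfix⟩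
    · intro j hj
      refine Finset.mem_filter.mpr ⟨(e j).2, ?_⟩
      rw [T_apply_img, (Finset.mem_filter.mp hj).2]
    · intro i hi
      simp
    · intro j hj
      simp
    · intro i hi
      rw [hxy]
      congr 1
      simp
  
lemma mem_iff_of_support_subset {τ : Equiv.Perm (Fin p)} (h : τ.support ⊆ Bs) :
    ∀ z, z ∈ Bs ↔ τ z ∈ Bs := by
  intro z
  constructor
  · intro hz
    rcases eq_or_ne (τ z) z with he | hne
    · rwa [he]
    · exact h (Equiv.Perm.apply_mem_support.mpr (Equiv.Perm.mem_support.mpr hne))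
  · intro hz
    by_contra hzB
    have : τ z = z := apply_mem_of_support_subset h hzB
    rw [this] at hz
    exact hzB hz

/-- Inverse transport: restriction of a permutation supported in `Bs`. -/
noncomputable def backT (τ : Equiv.Perm (Fin p)) : Equiv.Perm (Fin n) :=
  if h : ∀ z, z ∈ Bs ↔ τ z ∈ Bs then e.permCongr.symm (τ.subtypePerm (fun z => (h z).symm)) else 1

lemma T_backT {τ : Equiv.Perm (Fin p)} (h : τ.support ⊆ Bs) :
    T e (backT e τ) = τ := by
  have hiff := mem_iff_of_support_subset h
  rw [backT, dif_pos hiff]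
  apply Equiv.ext
  intro w
  by_cases hw : w ∈ Bs
  · obtain ⟨j, rfl⟩ : ∃ j, (e j : Fin p) = w := ⟨e.symm ⟨w, hw⟩, by simp⟩
    rw [T_apply_img]
    show ((e ((e.permCongr.symm (τ.subtypePerm (fun z => (hiff z).symm))) j)) : Fin p) = _
    rw [Equiv.permCongr_symm_apply]
    simp [Equiv.Perm.subtypePerm_apply]
  · rw [T_apply_not e _ hw]
    exact (apply_mem_of_support_subset h hw).symm

lemma backT_T (ρ : Equiv.Perm (Fin n)) : backT e (T e ρ) = ρ := by
  have hsupp : (T e ρ).support ⊆ Bs := by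
    rw [T_support]
    intro w hw
    obtain ⟨j, _, rfl⟩ := Finset.mem_map.mp hw
    exact (e j).2
  exact T_inj e (T_backT e hsupp)

lemma T_support_subset (ρ : Equiv.Perm (Fin n)) : (T e ρ).support ⊆ Bs := by
  rw [T_support]
  intro w hw
  obtain ⟨j, _, rfl⟩ := Finset.mem_map.mp hw
  exact (e j).2

lemma geoLe_T_iff (ρ ν : Equiv.Perm (Fin n)) :
    geoLe (T e ρ) (T e ν) ↔ geoLe ρ ν := by
  rw [geoLe, geoLe, T_len, ← T_inv, ← T_mul, T_len, T_len]

lemma geoLe_split {c σ' τ₁ τ₂ : Equiv.Perm (Fin p)}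
    (hc : c.support ⊆ Bs) (hσ' : σ'.support ⊆ Bsᶜ)
    (h1 : τ₁.support ⊆ Bs) (h2 : τ₂.support ⊆ Bsᶜ) :
    ((τ₁ * τ₂)⁻¹ * (c * σ') = (τ₁⁻¹ * c) * (τ₂⁻¹ * σ')) ∧
      (geoLe (τ₁ * τ₂) (c * σ') ↔ (geoLe τ₁ c ∧ geoLe τ₂ σ')) := by
  have hinv1 : τ₁⁻¹.support ⊆ Bs := by rw [Equiv.Perm.support_inv]; exact h1
  have hinv2 : τ₂⁻¹.support ⊆ Bsᶜ := by rw [Equiv.Perm.support_inv]; exact h2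
  have hτ1c : (τ₁⁻¹ * c).support ⊆ Bs := fun z hz => by
    rcases Finset.mem_union.mp (Equiv.Perm.support_mul_le _ _ hz) with h | h
    exacts [hinv1 h, hc h]
  have hτ2σ' : (τ₂⁻¹ * σ').support ⊆ Bsᶜ := fun z hz => by
    rcases Finset.mem_union.mp (Equiv.Perm.support_mul_le _ _ hz) with h | h
    exacts [hinv2 h, hσ' h]
  have c21 : Commute τ₂⁻¹ τ₁⁻¹ := (support_subsets_disjoint hinv1 hinv2).commute.symm
  have c2c : Commute τ₂⁻¹ c := (support_subsets_disjoint hc hinv2).commute.symm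
  have rearr : (τ₁ * τ₂)⁻¹ * (c * σ') = (τ₁⁻¹ * c) * (τ₂⁻¹ * σ') := by
    rw [mul_inv_rev]
    calc τ₂⁻¹ * τ₁⁻¹ * (c * σ') = τ₁⁻¹ * τ₂⁻¹ * (c * σ') := by rw [c21.eq]
      _ = τ₁⁻¹ * (τ₂⁻¹ * c) * σ' := by group
      _ = τ₁⁻¹ * (c * τ₂⁻¹) * σ' := by rw [c2c.eq]
      _ = (τ₁⁻¹ * c) * (τ₂⁻¹ * σ') := by group
  refine ⟨rearr, ?_⟩
  have len1 : permLength (τ₁ * τ₂) = permLength τ₁ + permLength τ₂ :=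
    permLength_mul_disjoint (support_subsets_disjoint h1 h2)
  have len2 : permLength ((τ₁⁻¹ * c) * (τ₂⁻¹ * σ')) =
      permLength (τ₁⁻¹ * c) + permLength (τ₂⁻¹ * σ') :=
    permLength_mul_disjoint (support_subsets_disjoint hτ1c hτ2σ')
  have len3 : permLength (c * σ') = permLength c + permLength σ' :=
    permLength_mul_disjoint (support_subsets_disjoint hc hσ')
  have tri1 : permLength c ≤ permLength τ₁ + permLength (τ₁⁻¹ * c) := by
    have := permLength_mul_le τ₁ (τ₁⁻¹ * c)
    rwa [mul_inv_cancel_left] at this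
  have tri2 : permLength σ' ≤ permLength τ₂ + permLength (τ₂⁻¹ * σ') := by
    have := permLength_mul_le τ₂ (τ₂⁻¹ * σ')
    rwa [mul_inv_cancel_left] at this
  rw [geoLe, geoLe, geoLe, rearr, len1, len2, len3]
  omega

end Transport

section Vanish
open Equiv Equiv.Perm Finset

variable {p : ℕ}

lemma finRotate_val {n : ℕ} (hn : 0 < n) (j : Fin n) :
    ((finRotate n) j : ℕ) = ((j : ℕ) + 1) % n := by
  obtain ⟨m, rfl⟩ : ∃ m, n = m + 1 := ⟨n - 1, by omega⟩
  rw [finRotate_succ_apply, Fin.val_add, Fin.val_one', Nat.add_mod_mod]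

/-- The part of a permutation acting on `Bs`. -/
noncomputable def P1 (Bs : Finset (Fin p)) (τ : Equiv.Perm (Fin p)) : Equiv.Perm (Fin p) :=
  if h : ∀ z, z ∈ Bs ↔ τ z ∈ Bs then Equiv.Perm.ofSubtype (τ.subtypePerm (fun z => (h z).symm)) else 1

lemma P1_apply {Bs : Finset (Fin p)} {τ : Equiv.Perm (Fin p)}
    (h : ∀ z, z ∈ Bs ↔ τ z ∈ Bs) (z : Fin p) :
    P1 Bs τ z = if z ∈ Bs then τ z else z := by
  rw [P1, dif_pos h]
  by_cases hz : z ∈ Bs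
  · rw [if_pos hz, Equiv.Perm.ofSubtype_apply_of_mem _ hz]
    rfl
  · rw [if_neg hz, Equiv.Perm.ofSubtype_apply_of_not_mem _ hz]

lemma P1_support {Bs : Finset (Fin p)} {τ : Equiv.Perm (Fin p)}
    (h : ∀ z, z ∈ Bs ↔ τ z ∈ Bs) : (P1 Bs τ).support ⊆ Bs := by
  intro z hz
  by_contra hzB
  rw [Equiv.Perm.mem_support, P1_apply h, if_neg hzB] at hz
  exact hz rfl

lemma P2_support {Bs : Finset (Fin p)} {τ : Equiv.Perm (Fin p)}
    (h : ∀ z, z ∈ Bs ↔ τ z ∈ Bs) : ((P1 Bs τ)⁻¹ * τ).support ⊆ Bsᶜ := by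
  intro z hz
  rw [Finset.mem_compl]
  intro hzB
  apply Equiv.Perm.mem_support.mp hz
  rw [Equiv.Perm.mul_apply, Equiv.Perm.inv_eq_iff_eq, P1_apply h, if_pos hzB]

lemma supp_mul_subset {a b : Equiv.Perm (Fin p)} {D : Finset (Fin p)}
    (ha : a.support ⊆ D) (hb : b.support ⊆ D) : (a * b).support ⊆ D := fun z hz => by
  rcases Finset.mem_union.mp (Equiv.Perm.support_mul_le _ _ hz) with h | h
  exacts [ha h, hb h]

lemma freeCum_eq_zero {A : Type*} [Ring A] [Algebra ℂ A] {L p : ℕ} (φ : A → ℂ)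
    (htr : ∀ a b : A, φ (a * b) = φ (b * a))
    (S : Fin L → Subalgebra ℂ A)
    (hfree : ∀ (n : ℕ) (g : Fin n → Fin L) (y : Fin n → A),
      (∀ i, y i ∈ S (g i)) → (∃ i j, g i ≠ g j) → freeCum φ (finRotate n) y = 0)
    (σ : Equiv.Perm (Fin p)) (f : Fin p → Fin L) (x : Fin p → A)
    (hx : ∀ j, x j ∈ S (f j))
    {i₀ j₀ : Fin p} (hsc : σ.SameCycle i₀ j₀) (hfne : f i₀ ≠ f j₀) :
    freeCum φ σ x = 0 := by
  classical
  -- the bad cycle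
  have hi₀ : σ i₀ ≠ i₀ := by
    intro hfix
    obtain ⟨i, hi⟩ := hsc
    rw [Equiv.Perm.zpow_apply_eq_self_of_apply_eq_self hfix] at hi
    exact hfne (congrArg f hi)
  set c := σ.cycleOf i₀ with hc
  have hcmem : c ∈ σ.cycleFactorsFinset :=
    Equiv.Perm.cycleOf_mem_cycleFactorsFinset_iff.mpr (Equiv.Perm.mem_support.mpr hi₀)
  have hccyc : c.IsCycle := Equiv.Perm.isCycle_cycleOf σ hi₀
  set Bs := c.support with hBs
  set n := Bs.card with hn
  have hi₀supp : i₀ ∈ σ.support := Equiv.Perm.mem_support.mpr hi₀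
  have hi₀Bs : i₀ ∈ Bs := by
    rw [hBs, Equiv.Perm.mem_support_cycleOf_iff]
    exact ⟨Equiv.Perm.SameCycle.refl _ _, hi₀supp⟩
  have hj₀Bs : j₀ ∈ Bs := by
    rw [hBs, Equiv.Perm.mem_support_cycleOf_iff]
    exact ⟨hsc, hi₀supp⟩
  have hordc : orderOf c = n := hccyc.orderOf
  have hn2 : 2 ≤ n := hccyc.two_le_card_support
  -- the enumeration of the cycle
  have hEmem : ∀ j : ℕ, (σ ^ j) i₀ ∈ Bs := by
    intro j
    rw [hBs, Equiv.Perm.mem_support_cycleOf_iff]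
    exact ⟨⟨(j : ℤ), by rw [zpow_natCast]⟩, hi₀supp⟩
  have hpow_inj : ∀ a b : ℕ, a ≤ b → b < n → (σ ^ a) i₀ = (σ ^ b) i₀ → a = b := by
    intro a b hab hbn hEq
    by_contra hne
    have hk : 0 < b - a := by omega
    have h1 : (σ ^ b) i₀ = (σ ^ a) ((σ ^ (b - a)) i₀) := by
      rw [← Equiv.Perm.mul_apply, ← pow_add]
      have hba : a + (b - a) = b := by omega
      rw [hba]
    rw [h1] at hEq
    have h2 : (σ ^ (b - a)) i₀ = i₀ := (σ ^ a).injective hEq.symm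
    have h3 : (c ^ (b - a)) i₀ = i₀ := by
      rw [hc, Equiv.Perm.cycleOf_pow_apply_self, h2]
    have hci₀ : c i₀ ≠ i₀ := by
      rw [hc, Equiv.Perm.cycleOf_apply_self]
      exact hi₀
    have h4 : c ^ (b - a) = 1 := (hccyc.pow_eq_one_iff).mpr ⟨i₀, hci₀, h3⟩
    have h5 : orderOf c ∣ (b - a) := orderOf_dvd_of_pow_eq_one h4
    have := Nat.le_of_dvd hk h5
    omega
  let E0 : Fin n → {z // z ∈ Bs} := fun j => ⟨(σ ^ (j : ℕ)) i₀, hEmem j⟩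
  have hE0inj : Function.Injective E0 := by
    intro a b hEq
    have h := congrArg Subtype.val hEq
    rcases le_total (a : ℕ) (b : ℕ) with hab | hab
    · exact Fin.ext (hpow_inj _ _ hab b.2 h)
    · exact (Fin.ext (hpow_inj _ _ hab a.2 h.symm)).symm
  have hcardBs : Fintype.card {z // z ∈ Bs} = n := Fintype.card_coe _
  let e : Fin n ≃ {z // z ∈ Bs} :=
    Equiv.ofBijective E0 ((Fintype.bijective_iff_injective_and_card E0).mpr
      ⟨hE0inj, by rw [hcardBs, Fintype.card_fin]⟩)
  have hE : ∀ j : Fin n, (e j : Fin p) = (σ ^ (j : ℕ)) i₀ := fun j => rfl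
  -- pow reduction
  have hpow_mod : ∀ k : ℕ, (σ ^ (k % n)) i₀ = (σ ^ k) i₀ := by
    intro k
    rw [← Equiv.Perm.cycleOf_pow_apply_self σ i₀, ← Equiv.Perm.cycleOf_pow_apply_self σ i₀, ← hc,
      ← hordc, pow_mod_orderOf]
  -- transport of the rotation
  have hTrot : T e (finRotate n) = c := by
    apply Equiv.ext
    intro w
    by_cases hw : w ∈ Bs
    · obtain ⟨j, rfl⟩ : ∃ j, (e j : Fin p) = w := ⟨e.symm ⟨w, hw⟩, by simp⟩
      rw [T_apply_img, hE, hE]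
      have hcapp : c ((σ ^ (j : ℕ)) i₀) = (σ ^ ((j : ℕ) + 1)) i₀ := by
        calc c ((σ ^ (j : ℕ)) i₀) = c ((c ^ (j : ℕ)) i₀) := by
              rw [hc, Equiv.Perm.cycleOf_pow_apply_self]
          _ = (c ^ ((j : ℕ) + 1)) i₀ := by rw [pow_succ', Equiv.Perm.mul_apply]
          _ = (σ ^ ((j : ℕ) + 1)) i₀ := by rw [hc, Equiv.Perm.cycleOf_pow_apply_self]
      rw [hcapp]
      have : ((finRotate n j : Fin n) : ℕ) = ((j : ℕ) + 1) % n := finRotate_val (by omega) j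
      rw [this, hpow_mod]
    · rw [T_apply_not e _ hw]
      exact (Equiv.Perm.notMem_support.mp (fun hmem => hw (hBs ▸ hmem))).symm
  -- the rest of the permutation
  set σ' := σ * c⁻¹ with hσ'
  have hdisj : (σ').Disjoint c := Equiv.Perm.disjoint_mul_inv_of_mem_cycleFactorsFinset hcmem
  have hσ'supp : σ'.support ⊆ Bsᶜ := by
    intro z hz
    rw [Finset.mem_compl, hBs]
    rcases hdisj z with h | h
    · exact absurd h (Equiv.Perm.mem_support.mp hz)
    · exact Equiv.Perm.notMem_support.mpr h
  have hcsupp : c.support ⊆ Bs := by rw [hBs]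
  have hσeq : σ = c * σ' := by
    have h1 : σ' * c = σ := by rw [hσ', inv_mul_cancel_right]
    rw [← h1, hdisj.commute.eq]
  -- the tensor-leg functions
  set y : Fin n → A := fun j => x ((e j : Fin p)) with hy
  have hzero : freeCum φ (finRotate n) y = 0 := by
    apply hfree n (fun j => f ((e j : Fin p))) y (fun j => hx _)
    refine ⟨e.symm ⟨i₀, hi₀Bs⟩, e.symm ⟨j₀, hj₀Bs⟩, ?_⟩
    simpa using hfne
  -- the inner sum is the rotation cumulant
  have hinner : (∑ τ₁ ∈ Finset.univ.filter
        (fun τ₁ : Equiv.Perm (Fin p) => geoLe τ₁ c ∧ τ₁.support ⊆ Bs),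
      relM φ τ₁ x Bs * moeb (τ₁⁻¹ * c)) = freeCum φ (finRotate n) y := by
    rw [freeCum]
    refine Finset.sum_bij' (fun τ₁ _ => backT e τ₁) (fun ρ _ => T e ρ) ?_ ?_ ?_ ?_ ?_
    · intro τ₁ hτ₁
      obtain ⟨hgeo, hsupp⟩ := (Finset.mem_filter.mp hτ₁).2
      have hTb := T_backT e hsupp
      refine Finset.mem_filter.mpr ⟨Finset.mem_univ _, ?_⟩
      apply (geoLe_T_iff e _ _).mp
      rw [hTb, hTrot]
      exact hgeo
    · intro ρ hρ
      have hgeo := (Finset.mem_filter.mp hρ).2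
      refine Finset.mem_filter.mpr ⟨Finset.mem_univ _, ?_, T_support_subset e ρ⟩
      rw [← hTrot]
      exact (geoLe_T_iff e _ _).mpr hgeo
    · intro τ₁ hτ₁
      exact T_backT e (Finset.mem_filter.mp hτ₁).2.2
    · intro ρ _
      exact backT_T e ρ
    · intro τ₁ hτ₁
      have hsupp := (Finset.mem_filter.mp hτ₁).2.2
      have hTb := T_backT e hsupp
      congr 1
      · conv_lhs => rw [← hTb]
        exact T_relM e φ htr x y (fun j => rfl) (backT e τ₁)
      · conv_rhs => rw [← T_moeb e ((backT e τ₁)⁻¹ * finRotate n), T_mul, T_inv, hTb, hTrot]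
  -- the outer splitting
  have houter : freeCum φ σ x =
      (∑ τ₁ ∈ Finset.univ.filter
          (fun τ₁ : Equiv.Perm (Fin p) => geoLe τ₁ c ∧ τ₁.support ⊆ Bs),
        relM φ τ₁ x Bs * moeb (τ₁⁻¹ * c)) *
      (∑ τ₂ ∈ Finset.univ.filter
          (fun τ₂ : Equiv.Perm (Fin p) => geoLe τ₂ σ' ∧ τ₂.support ⊆ Bsᶜ),
        relM φ τ₂ x Bsᶜ * moeb (τ₂⁻¹ * σ')) := by
    rw [freeCum, Finset.sum_mul_sum, ← Finset.sum_product']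
    refine Finset.sum_bij' (fun τ _ => (P1 Bs τ, (P1 Bs τ)⁻¹ * τ))
      (fun q _ => q.1 * q.2) ?_ ?_ ?_ ?_ ?_
    · intro τ hτ
      have hgeo : geoLe τ σ := (Finset.mem_filter.mp hτ).2
      have hiff : ∀ z, z ∈ Bs ↔ τ z ∈ Bs := by
        intro z
        have hzz : σ.SameCycle z (τ z) :=
          sameCycle_of_geoLe hgeo z (τ z) ⟨1, by simp⟩
        rw [hBs, Equiv.Perm.mem_support_cycleOf_iff, Equiv.Perm.mem_support_cycleOf_iff]
        constructor
        · rintro ⟨h1, h2⟩; exact ⟨h1.trans hzz, h2⟩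
        · rintro ⟨h1, h2⟩; exact ⟨h1.trans hzz.symm, h2⟩
      have h1 : (P1 Bs τ).support ⊆ Bs := P1_support hiff
      have h2 : ((P1 Bs τ)⁻¹ * τ).support ⊆ Bsᶜ := P2_support hiff
      have hprod : P1 Bs τ * ((P1 Bs τ)⁻¹ * τ) = τ := by rw [mul_inv_cancel_left]
      have hsplit := (geoLe_split hcsupp hσ'supp h1 h2).2
      rw [Finset.mem_product]
      have hgeo2 : geoLe (P1 Bs τ * ((P1 Bs τ)⁻¹ * τ)) (c * σ') := by
        rw [hprod, ← hσeq]; exact hgeo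
      obtain ⟨hg1, hg2⟩ := hsplit.mp hgeo2
      exact ⟨Finset.mem_filter.mpr ⟨Finset.mem_univ _, hg1, h1⟩,
        Finset.mem_filter.mpr ⟨Finset.mem_univ _, hg2, h2⟩⟩
    · intro q hq
      rw [Finset.mem_product] at hq
      obtain ⟨hq1, hq2⟩ := hq
      obtain ⟨hg1, h1⟩ := (Finset.mem_filter.mp hq1).2
      obtain ⟨hg2, h2⟩ := (Finset.mem_filter.mp hq2).2
      refine Finset.mem_filter.mpr ⟨Finset.mem_univ _, ?_⟩
      rw [hσeq]
      exact ((geoLe_split hcsupp hσ'supp h1 h2).2).mpr ⟨hg1, hg2⟩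
    · intro τ _
      simp [mul_inv_cancel_left]
    · intro q hq
      rw [Finset.mem_product] at hq
      obtain ⟨hq1, hq2⟩ := hq
      obtain ⟨hg1, h1⟩ := (Finset.mem_filter.mp hq1).2
      obtain ⟨hg2, h2⟩ := (Finset.mem_filter.mp hq2).2
      have hiff12 : ∀ z, z ∈ Bs ↔ (q.1 * q.2) z ∈ Bs := by
        intro z
        rw [Equiv.Perm.mul_apply]
        by_cases hz : z ∈ Bs
        · have hz2 : q.2 z = z := apply_mem_of_support_subset h2 (by simpa using hz)
          rw [hz2]
          exact mem_iff_of_support_subset h1 z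
        · have hz2 : q.2 z ∉ Bs := by
            have := (mem_iff_of_support_subset (Bs := Bsᶜ) h2 z).mp (by simpa using hz)
            simpa using this
          have hz1 : q.1 (q.2 z) = q.2 z := apply_mem_of_support_subset h1 hz2
          rw [hz1]
          exact iff_of_false hz hz2
      have hP : P1 Bs (q.1 * q.2) = q.1 := by
        apply Equiv.ext
        intro z
        rw [P1_apply hiff12 z]
        by_cases hz : z ∈ Bs
        · have hz2 : q.2 z = z := apply_mem_of_support_subset h2 (by simpa using hz)
          rw [if_pos hz, Equiv.Perm.mul_apply, hz2]
        · rw [if_neg hz]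
          exact (apply_mem_of_support_subset h1 hz).symm
      refine Prod.ext ?_ ?_
      · show P1 Bs (q.1 * q.2) = q.1
        exact hP
      · show (P1 Bs (q.1 * q.2))⁻¹ * (q.1 * q.2) = q.2
        rw [hP, inv_mul_cancel_left]
    · intro τ hτ
      have hgeo : geoLe τ σ := (Finset.mem_filter.mp hτ).2
      have hiff : ∀ z, z ∈ Bs ↔ τ z ∈ Bs := by
        intro z
        have hzz : σ.SameCycle z (τ z) :=
          sameCycle_of_geoLe hgeo z (τ z) ⟨1, by simp⟩
        rw [hBs, Equiv.Perm.mem_support_cycleOf_iff, Equiv.Perm.mem_support_cycleOf_iff]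
        constructor
        · rintro ⟨ha, hb⟩; exact ⟨ha.trans hzz, hb⟩
        · rintro ⟨ha, hb⟩; exact ⟨ha.trans hzz.symm, hb⟩
      have h1 : (P1 Bs τ).support ⊆ Bs := P1_support hiff
      have h2 : ((P1 Bs τ)⁻¹ * τ).support ⊆ Bsᶜ := P2_support hiff
      have hprod : P1 Bs τ * ((P1 Bs τ)⁻¹ * τ) = τ := by rw [mul_inv_cancel_left]
      have hmom : permMoment φ τ x =
          relM φ (P1 Bs τ) x Bs * relM φ ((P1 Bs τ)⁻¹ * τ) x Bsᶜ := by
        rw [permMoment_eq_relM]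
        conv_lhs => rw [← hprod]
        exact relM_mul_split φ x h1 h2
      have hmoeb : moeb (τ⁻¹ * σ) =
          moeb ((P1 Bs τ)⁻¹ * c) * moeb ((((P1 Bs τ)⁻¹ * τ))⁻¹ * σ') := by
        have hre := (geoLe_split hcsupp hσ'supp h1 h2).1
        rw [hprod] at hre
        rw [hσeq, hre]
        apply moeb_mul_disjoint
        apply support_subsets_disjoint (B := Bs)
        · apply supp_mul_subset _ hcsupp
          rw [Equiv.Perm.support_inv]
          exact h1
        · apply supp_mul_subset _ hσ'supp
          rw [Equiv.Perm.support_inv]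
          exact h2
      rw [hmom, hmoeb]
      ring
  rw [houter, hinner, hzero, zero_mul]

end Vanish

end TF


/-- Tensor freeness of componentwise tensor products of free families: if for each `s` the
unital subalgebras `S s 1, …, S s L` of `(B s, φ s)` are freely independent (vanishing mixed
free cumulants), then the tensor-product subalgebras `A_i = ⨂_s S s i` are tensor freely
independent: for any irreducible tuple `α̲` and non-constant `f : [p] → [L]`, the mixed tensor
free cumulant of elements `x_j = Σ_t ⨂_s a j t s` with `a j t s ∈ S s (f j)` vanishes.  (On
the tensor product space, tensor free cumulants factorize on simple tensors as
`∏_s κ̃^{(s)}_{α_s}` and extend multilinearly.) -/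
theorem tensorProduct_of_free_is_tensorFree
    {r L p : ℕ} (B : Fin r → Type*) [∀ s, Ring (B s)] [∀ s, Algebra ℂ (B s)]
    (φ : ∀ s, B s → ℂ)
    (htracial : ∀ s, ∀ a b : B s, φ s (a * b) = φ s (b * a))
    (S : ∀ s : Fin r, Fin L → Subalgebra ℂ (B s))
    (hfree : ∀ s : Fin r, ∀ (n : ℕ) (f : Fin n → Fin L) (y : Fin n → B s),
      (∀ i, y i ∈ S s (f i)) → (∃ i j, f i ≠ f j) →
      freeCum (φ s) (finRotate n) y = 0)
    (α : Fin r → Equiv.Perm (Fin p)) (hirr : IrreducibleTuple α)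
    (f : Fin p → Fin L) (hf : ∃ i j, f i ≠ f j)
    (k : Fin p → ℕ) (a : ∀ j : Fin p, Fin (k j) → ∀ s, B s)
    (ha : ∀ j t s, a j t s ∈ S s (f j)) :
    ∑ t : (∀ j, Fin (k j)), ∏ s, freeCum (φ s) (α s) (fun j => a j (t j) s) = 0 := by
  classical
  -- find a component and a cycle on which `f` is not constant
  have hstep : ∃ (s : Fin r) (i j : Fin p), (α s).SameCycle i j ∧ f i ≠ f j := by
    by_contra h
    push_neg at h
    obtain ⟨i, j, hij⟩ := hf
    have hconst : ∀ a b : Fin p,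
        Relation.EqvGen (fun i j => ∃ s, (α s).SameCycle i j) a b → f a = f b := by
      intro a b hab
      induction hab with
      | rel a b h' =>
        obtain ⟨s, hs⟩ := h'
        exact h s a b hs
      | refl => rfl
      | symm _ _ _ ih => exact ih.symm
      | trans _ _ _ _ _ ih1 ih2 => exact ih1.trans ih2
    exact hij (hconst i j (hirr i j))
  obtain ⟨s₀, i₀, j₀, hsc, hfne⟩ := hstep
  apply Finset.sum_eq_zero
  intro t _
  apply Finset.prod_eq_zero (Finset.mem_univ s₀)
  exact TF.freeCum_eq_zero (φ s₀) (htracial s₀) (S s₀) (hfree s₀) (α s₀) f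
    (fun j => a j (t j) s₀) (fun j => ha j (t j) s₀) hsc hfne
end
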